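/- arXiv:1706.07085 — 10 statements merged into one kernel-verified Lean document; each statement's English description precedes it below -/
import Mathlib

section
/- Let G be a connected graph on n vertices with Laplacian L, and let L_B = L·A where A is the n×(n-1) matrix with a_{ij} = 1 for i ≤ j ≤ n-1 and 0 otherwise. Then the absolute value of the determinant of the n×n matrix [L_B | 1] (L_B with a column of all ones appended) equals n·κ, where κ is the number of spanning trees of G. -/
/-!
Write `L = N Nᵀ` with `N` an oriented vertex-edge incidence matrix. By Cauchy–Binet, the minor
of `L` at a vertex `r` is the sum of `det (N_S)²` over the sets `S` of `|V| - 1` edges, `N_S`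
being `N` with row `r` deleted and columns restricted to `S`. If `S` spans a connected graph,
hence a spanning tree, the flows along paths to `r` invert `N_S` over `ℤ`, so `det (N_S)² = 1`;
otherwise the indicator of a component missing `r` lies in the left kernel of `N_S`. So the minor
is `κ` (Kirchhoff).

The columns of `L_B = L A` are the partial sums of the columns of `L`, so `det [L_B | 1]` is the
determinant of `L` with its last column replaced by ones. As the columns of `L` sum to zero, adding
all rows to the last one turns it into `(0, …, 0, n)`, and expanding along it gives `n κ`.
-/

open Finset Matrix

section CauchyBinet

variable {ι E : Type*} [Fintype ι]

noncomputable def subsetEnum (S : {S : Finset E // #S = Fintype.card ι}) : ι → E :=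
  fun i => (Fintype.equivOfCardEq (by simp [S.2]) : ι ≃ S.1) i

lemma subsetEnum_mem (S : {S : Finset E // #S = Fintype.card ι}) (i : ι) :
    subsetEnum S i ∈ S.1 :=
  Subtype.prop _

lemma subsetEnum_injective (S : {S : Finset E // #S = Fintype.card ι}) :
    Function.Injective (subsetEnum S) :=
  Subtype.val_injective.comp (Equiv.injective _)

lemma exists_subsetEnum_eq (S : {S : Finset E // #S = Fintype.card ι}) {e : E} (he : e ∈ S.1) :
    ∃ i, subsetEnum S i = e :=
  ⟨(Fintype.equivOfCardEq (by simp [S.2]) : ι ≃ S.1).symm ⟨e, he⟩, by simp [subsetEnum]⟩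

variable [DecidableEq ι] [Fintype E] {R : Type*} [CommRing R]

lemma Matrix.det_mul_eq_sum_prod_mul_det_submatrix (A : Matrix ι E R) (B : Matrix E ι R) :
    (A * B).det = ∑ f : ι → E, (∏ i, B (f i) i) * (A.submatrix id f).det := by
  simp only [det_apply', mul_apply, prod_univ_sum, mul_sum, Fintype.piFinset_univ]
  rw [sum_comm]
  refine sum_congr rfl fun f _ => sum_congr rfl fun σ _ => ?_
  simp only [submatrix_apply, id_eq, prod_mul_distrib]
  ring

variable [DecidableEq E]

/-- Every injection `ι → E` is, in exactly one way, an enumeration of its image precomposed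
with a permutation. -/
lemma sum_filter_injective_eq_sum_subsetEnum_comp {M : Type*} [AddCommMonoid M]
    (F : (ι → E) → M) :
    ∑ f ∈ univ.filter Function.Injective, F f =
      ∑ S : {S : Finset E // #S = Fintype.card ι},
        ∑ σ : Equiv.Perm ι, F (subsetEnum S ∘ σ) := by
  rw [← Fintype.sum_prod_type']
  symm
  refine Finset.sum_bij (fun p _ => subsetEnum p.1 ∘ p.2) (fun p _ => ?_) ?_ ?_ (fun _ _ => rfl)
  · simpa using (subsetEnum_injective p.1).comp p.2.injective
  · rintro ⟨S, σ⟩ - ⟨T, τ⟩ - h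
    have hST : S = T := by
      ext e
      constructor <;> intro he
      · obtain ⟨i, rfl⟩ := exists_subsetEnum_eq S he
        have hi := congrFun h (σ.symm i)
        simp only [Function.comp_apply, Equiv.apply_symm_apply] at hi
        exact hi ▸ subsetEnum_mem T _
      · obtain ⟨i, rfl⟩ := exists_subsetEnum_eq T he
        have hi := congrFun h (τ.symm i)
        simp only [Function.comp_apply, Equiv.apply_symm_apply] at hi
        exact hi ▸ subsetEnum_mem S _
    subst hST
    simpa using Equiv.ext fun i => subsetEnum_injective S (congrFun h i)
  · intro f hf
    simp only [mem_filter, mem_univ, true_and] at hf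
    let S : {S : Finset E // #S = Fintype.card ι} :=
      ⟨univ.image f, by rw [card_image_of_injective _ hf, card_univ]⟩
    have hfS : ∀ i, f i ∈ S.1 := fun i => mem_image_of_mem f (mem_univ i)
    obtain ⟨σ, hσ⟩ : ∃ σ : Equiv.Perm ι, ∀ i, subsetEnum S (σ i) = f i := by
      choose g hg using fun i => exists_subsetEnum_eq S (hfS i)
      have hg_inj : Function.Injective g := fun i j hij => hf (by rw [← hg i, ← hg j, hij])
      exact ⟨Equiv.ofBijective g hg_inj.bijective_of_finite, hg⟩
    exact ⟨(S, σ), mem_univ _, funext hσ⟩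

theorem Matrix.det_mul_eq_sum_det_submatrix_mul_det_submatrix (A : Matrix ι E R)
    (B : Matrix E ι R) :
    (A * B).det = ∑ S : {S : Finset E // #S = Fintype.card ι},
      (A.submatrix id (subsetEnum S)).det * (B.submatrix (subsetEnum S) id).det := by
  have h_noninj : ∀ f : ι → E, ¬ Function.Injective f → (A.submatrix id f).det = 0 := by
    intro f hf
    obtain ⟨i, j, hfij, hij⟩ : ∃ i j, f i = f j ∧ i ≠ j := by
      simpa [Function.Injective] using hf
    exact det_zero_of_column_eq hij fun k => by simp [hfij]
  rw [det_mul_eq_sum_prod_mul_det_submatrix,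
    ← sum_filter_of_ne (p := Function.Injective) fun f _ h => ?_,
    sum_filter_injective_eq_sum_subsetEnum_comp]
  · refine sum_congr rfl fun S _ => ?_
    rw [det_apply' (B.submatrix _ _), mul_sum]
    refine sum_congr rfl fun σ _ => ?_
    rw [show A.submatrix id (subsetEnum S ∘ σ) = (A.submatrix id (subsetEnum S)).submatrix id σ
      from rfl, det_permute']
    simp only [submatrix_apply, id_eq, Function.comp_apply]
    ring
  · by_contra hf
    exact h (by rw [h_noninj f hf, mul_zero])

end CauchyBinet

namespace Sym2

variable {V : Type*} [DecidableEq V]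

noncomputable def orientedInc (v : V) (e : Sym2 V) : ℤ :=
  (if v = e.out.1 then 1 else 0) - (if v = e.out.2 then 1 else 0)

noncomputable def orientationSign (a b : V) : ℤ :=
  if s(a, b).out.1 = a then 1 else -1

lemma orientationSign_mul_self (a b : V) : orientationSign a b * orientationSign a b = 1 := by
  unfold orientationSign
  split_ifs <;> norm_num

lemma orientedInc_mk {a b : V} (hab : a ≠ b) (v : V) :
    orientedInc v s(a, b) =
      orientationSign a b * ((if v = a then 1 else 0) - (if v = b then 1 else 0)) := by
  have hout : s(a, b).out = (a, b) ∨ s(a, b).out = (b, a) := by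
    have h := s(a, b).out_eq
    rw [← Prod.mk.eta (p := s(a, b).out), Sym2.eq_iff] at h
    rcases h with ⟨h1, h2⟩ | ⟨h1, h2⟩
    · exact Or.inl (Prod.ext h1 h2)
    · exact Or.inr (Prod.ext h1 h2)
  rcases hout with h | h <;> simp [orientedInc, orientationSign, h, hab.symm]

lemma orientedInc_mul_orientedInc {e : Sym2 V} (he : ¬ e.IsDiag) (v w : V) :
    orientedInc v e * orientedInc w e =
      if v = w then (if v ∈ e then 1 else 0) else (if e = s(v, w) then -1 else 0) := by
  induction e with
  | h a b =>
    have hab : a ≠ b := by simpa using he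
    rw [orientedInc_mk hab, orientedInc_mk hab,
      mul_mul_mul_comm, orientationSign_mul_self, one_mul]
    by_cases hva : v = a <;> by_cases hvb : v = b <;> by_cases hwa : w = a <;>
      by_cases hwb : w = b <;> simp_all [eq_comm]

lemma sum_mul_orientedInc_mk [Fintype V] {a b : V} (hab : a ≠ b) (x : V → ℤ) :
    ∑ v, x v * orientedInc v s(a, b) = orientationSign a b * (x a - x b) := by
  simp [orientedInc_mk hab, mul_sub, sum_sub_distrib]
  ring

end Sym2

namespace SimpleGraph

variable {V : Type*}

section OfEdges

variable (G : SimpleGraph V)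

def ofEdges (S : Finset G.edgeSet) : SimpleGraph V :=
  fromEdgeSet ((↑) '' (S : Set G.edgeSet))

lemma edgeSet_ofEdges (S : Finset G.edgeSet) :
    (G.ofEdges S).edgeSet = (↑) '' (S : Set G.edgeSet) := by
  rw [ofEdges, edgeSet_fromEdgeSet, sdiff_eq_left, Set.disjoint_left]
  rintro _ ⟨e, -, rfl⟩
  exact G.not_isDiag_of_mem_edgeSet e.2

lemma ofEdges_le (S : Finset G.edgeSet) : G.ofEdges S ≤ G := by
  rw [← edgeSet_subset_edgeSet, edgeSet_ofEdges]
  rintro _ ⟨e, -, rfl⟩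
  exact e.2

lemma isTree_ofEdges_iff [Fintype V] (S : Finset G.edgeSet) :
    (G.ofEdges S).IsTree ↔ (G.ofEdges S).Connected ∧ #S + 1 = Fintype.card V := by
  rw [isTree_iff_connected_and_card, edgeSet_ofEdges,
    Nat.card_image_of_injective Subtype.val_injective, Finset.coe_sort_coe,
    Nat.card_eq_finsetCard, Nat.card_eq_fintype_card]

lemma isTree_coe_toSubgraph_iff {H : SimpleGraph V} (h : H ≤ G) :
    (toSubgraph H h).coe.IsTree ↔ H.IsTree :=
  (Iso.isTree_iff (Subgraph.spanningCoeEquivCoeOfSpanning _ (toSubgraph.isSpanning H h))).symm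

end OfEdges

variable [DecidableEq V]

namespace Walk

variable {G : SimpleGraph V}

noncomputable def flow : ∀ {a b : V}, G.Walk a b → Sym2 V → ℤ
  | _, _, nil => 0
  | a, _, cons (v := c) _ p => fun e =>
    (if e = s(a, c) then Sym2.orientationSign a c else 0) + p.flow e

lemma mem_edges_of_flow_ne_zero : ∀ {a b : V} (p : G.Walk a b) {e : Sym2 V},
    p.flow e ≠ 0 → e ∈ p.edges
  | _, _, nil, e, h => by simp [flow] at h
  | a, _, cons (v := c) _ p, e, h => by
    by_cases he : e = s(a, c)
    · simp [he]
    · simp only [flow, if_neg he, zero_add] at h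
      exact List.mem_cons_of_mem _ (p.mem_edges_of_flow_ne_zero h)

lemma sum_flow_mul_orientedInc [Fintype V] : ∀ {a b : V} (p : G.Walk a b) (v : V),
    ∑ e, p.flow e * Sym2.orientedInc v e = (if v = a then 1 else 0) - (if v = b then 1 else 0)
  | _, _, nil, v => by simp [flow]
  | a, _, cons (v := c) h p, v => by
    simp only [flow, add_mul, sum_add_distrib, ite_mul, zero_mul, sum_ite_eq', mem_univ, if_true,
      p.sum_flow_mul_orientedInc, Sym2.orientedInc_mk h.ne, ← mul_assoc,
      Sym2.orientationSign_mul_self, one_mul]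
    ring

end Walk

variable (G : SimpleGraph V)

noncomputable def orientedIncMatrix : Matrix V G.edgeSet ℤ :=
  .of fun v e => Sym2.orientedInc v e

variable [Fintype V]

noncomputable def reducedIncMatrix {r : V}
    (S : {S : Finset G.edgeSet // #S = Fintype.card {v // v ≠ r}}) :
    Matrix {v // v ≠ r} {v // v ≠ r} ℤ :=
  G.orientedIncMatrix.submatrix (↑) (subsetEnum S)

section ReducedIncMatrix

variable {G} {r : V} (S : {S : Finset G.edgeSet // #S = Fintype.card {v // v ≠ r}})

lemma sum_subsetEnum_eq_sum {f : Sym2 V → ℤ}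
    (hf : ∀ e, f e ≠ 0 → e ∈ (G.ofEdges S.1).edgeSet) :
    ∑ j, f (subsetEnum S j : G.edgeSet) = ∑ e, f e := by
  calc ∑ j, f (subsetEnum S j : G.edgeSet) = ∑ e ∈ S.1, f e :=
        (Equiv.sum_comp (Fintype.equivOfCardEq _) (fun e : S.1 => f e)).trans
          (sum_coe_sort S.1 (fun e => f e))
    _ = ∑ e ∈ S.1.image (↑), f e := (sum_image fun _ _ _ _ => Subtype.ext).symm
    _ = ∑ e, f e := sum_subset (subset_univ _) fun e _ he => by
        by_contra hfe
        obtain ⟨e', he', rfl⟩ := edgeSet_ofEdges G S.1 ▸ hf e hfe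
        exact he (mem_image_of_mem _ he')

/-- The flows of paths from the vertices to `r` form an inverse of the reduced incidence matrix. -/
lemma det_reducedIncMatrix_mul_self_of_connected (hS : (G.ofEdges S.1).Connected) :
    (G.reducedIncMatrix S).det * (G.reducedIncMatrix S).det = 1 := by
  classical
  let p : ∀ w : V, (G.ofEdges S.1).Walk w r := fun w => (hS.preconnected w r).some
  let Y : Matrix {v // v ≠ r} {v // v ≠ r} ℤ :=
    .of fun j w => (p w).flow (subsetEnum S j : G.edgeSet)
  have hBY : G.reducedIncMatrix S * Y = 1 := by
    ext v w
    have hf : ∀ e, (p w).flow e * Sym2.orientedInc (v : V) e ≠ 0 →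
        e ∈ (G.ofEdges S.1).edgeSet :=
      fun e he => (p w).edges_subset_edgeSet
        ((p w).mem_edges_of_flow_ne_zero (left_ne_zero_of_mul he))
    rw [mul_apply]
    simp only [reducedIncMatrix, submatrix_apply, orientedIncMatrix, Y, of_apply,
      mul_comm (Sym2.orientedInc _ _)]
    rw [sum_subsetEnum_eq_sum S hf, Walk.sum_flow_mul_orientedInc]
    simp [one_apply, Subtype.ext_iff, v.2]
  exact Int.isUnit_mul_self (IsUnit.of_mul_eq_one _ (by rw [← det_mul, hBY, det_one]))

/-- The indicator of a connected component avoiding `r` is in the left kernel. -/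
lemma det_reducedIncMatrix_eq_zero_of_not_connected (hS : ¬ (G.ofEdges S.1).Connected) :
    (G.reducedIncMatrix S).det = 0 := by
  classical
  set H := G.ofEdges S.1
  obtain ⟨u, hu⟩ : ∃ u, ¬ H.Reachable u r := by
    by_contra! h
    have : Nonempty V := ⟨r⟩
    exact hS (Connected.mk fun a b => (h a).trans (h b).symm)
  let x : V → ℤ := fun v => if H.Reachable u v then 1 else 0
  have hx : ∀ e ∈ H.edgeSet, ∑ v, x v * Sym2.orientedInc v e = 0 := by
    intro e he
    induction e with
    | h a b =>
      have hab : H.Reachable u a ↔ H.Reachable u b :=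
        ⟨fun h => h.trans he.reachable, fun h => h.trans he.symm.reachable⟩
      rw [Sym2.sum_mul_orientedInc_mk (H.ne_of_adj he)]
      simp [x, hab]
  refine exists_vecMul_eq_zero_iff.mp ⟨fun v => x v, fun h => ?_, funext fun j => ?_⟩
  · have := congrFun h ⟨u, by rintro rfl; exact hu (Reachable.refl _)⟩
    simp [x] at this
  · have hj : ((subsetEnum S j : G.edgeSet) : Sym2 V) ∈ H.edgeSet :=
      edgeSet_ofEdges G S.1 ▸ ⟨_, subsetEnum_mem S j, rfl⟩
    have hxr : x r * Sym2.orientedInc r (subsetEnum S j : G.edgeSet) = 0 := by simp [x, hu]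
    rw [Pi.zero_apply, ← hx _ hj, Fintype.sum_eq_add_sum_subtype_ne _ r, hxr, zero_add]
    rfl

end ReducedIncMatrix

variable [DecidableRel G.Adj]

lemma lapMatrix_eq_orientedIncMatrix_mul_transpose :
    G.lapMatrix ℤ = G.orientedIncMatrix * G.orientedIncMatrixᵀ := by
  ext v w
  have hsum : (G.orientedIncMatrix * G.orientedIncMatrixᵀ) v w =
      ∑ e ∈ G.edgeFinset,
        if v = w then (if v ∈ e then 1 else 0) else (if e = s(v, w) then -1 else 0) := by
    rw [sum_subtype G.edgeFinset (fun _ => mem_edgeFinset)]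
    exact sum_congr rfl fun e _ =>
      Sym2.orientedInc_mul_orientedInc (G.not_isDiag_of_mem_edgeSet e.2) v w
  rw [hsum]
  by_cases hvw : v = w
  · subst hvw
    simp [sum_boole, ← incidenceFinset_eq_filter, card_incidenceFinset_eq_degree, lapMatrix,
      degMatrix]
  · by_cases hadj : G.Adj v w <;> simp [hvw, hadj, lapMatrix, degMatrix]

open Classical in
noncomputable def finsetEdgeSetEquivSpanning :
    Finset G.edgeSet ≃ {H : G.Subgraph // H.IsSpanning} where
  toFun S := ⟨toSubgraph (G.ofEdges S) (G.ofEdges_le S), toSubgraph.isSpanning _ _⟩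
  invFun H := univ.filter fun e => (e : Sym2 V) ∈ H.1.edgeSet
  left_inv S := by
    ext ⟨e, he⟩
    induction e with
    | h a b =>
      rw [mem_filter]
      simp [toSubgraph, ofEdges, G.ne_of_adj he]
      exact ⟨fun ⟨_, h⟩ => h, fun h => ⟨he, h⟩⟩
  right_inv H := by
    ext a b
    · simp [toSubgraph, H.2 _]
    · simp only [toSubgraph, ofEdges, fromEdgeSet_adj, coe_filter, mem_univ, true_and,
        Set.mem_image, Set.mem_ofPred_eq, Subtype.exists, exists_and_right, exists_eq_right,
        Subgraph.mem_edgeSet]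
      exact ⟨fun h => h.1.2, fun h => ⟨⟨H.1.adj_sub h, h⟩, h.ne⟩⟩

lemma card_spanning_isTree_eq_card_connected (r : V) :
    Nat.card {H : G.Subgraph // H.IsSpanning ∧ H.coe.IsTree} =
      Nat.card {S : {S : Finset G.edgeSet // #S = Fintype.card {v // v ≠ r}} //
        (G.ofEdges S.1).Connected} := by
  have hcard : Fintype.card {v // v ≠ r} + 1 = Fintype.card V := by
    rw [Fintype.card_subtype_compl, Fintype.card_subtype_eq]
    have := Fintype.card_pos_iff.mpr ⟨r⟩
    omega
  calc Nat.card {H : G.Subgraph // H.IsSpanning ∧ H.coe.IsTree}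
      = Nat.card {S : Finset G.edgeSet // (G.ofEdges S).IsTree} :=
        Nat.card_congr ((Equiv.subtypeSubtypeEquivSubtypeInter _ _).symm.trans
          (Equiv.subtypeEquiv G.finsetEdgeSetEquivSpanning
            fun S => (G.isTree_coe_toSubgraph_iff (G.ofEdges_le S)).symm).symm)
    _ = Nat.card {S : Finset G.edgeSet // #S = Fintype.card {v // v ≠ r} ∧
          (G.ofEdges S).Connected} := by
        simp_rw [isTree_ofEdges_iff, ← hcard, Nat.add_right_cancel_iff, and_comm]
    _ = _ := Nat.card_congr (Equiv.subtypeSubtypeEquivSubtypeInter _ _).symm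

theorem det_lapMatrix_submatrix_eq_card_spanning_isTree (r : V) :
    ((G.lapMatrix ℤ).submatrix (↑) (↑) : Matrix {v // v ≠ r} {v // v ≠ r} ℤ).det =
      Nat.card {H : G.Subgraph // H.IsSpanning ∧ H.coe.IsTree} := by
  classical
  have hfac : ((G.lapMatrix ℤ).submatrix (↑) (↑) : Matrix {v // v ≠ r} {v // v ≠ r} ℤ) =
      G.orientedIncMatrix.submatrix (↑) id * (G.orientedIncMatrix.submatrix (↑) id)ᵀ := by
    rw [lapMatrix_eq_orientedIncMatrix_mul_transpose]
    ext v w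
    simp [mul_apply]
  rw [hfac, det_mul_eq_sum_det_submatrix_mul_det_submatrix,
    card_spanning_isTree_eq_card_connected G r, Nat.card_eq_fintype_card,
    Fintype.card_subtype (fun S : {S : Finset G.edgeSet // #S = Fintype.card {v // v ≠ r}} =>
      (G.ofEdges S.1).Connected), ← sum_boole]
  refine sum_congr rfl fun S _ => ?_
  change (G.reducedIncMatrix S).det * (G.reducedIncMatrix S)ᵀ.det = _
  rw [det_transpose]
  split_ifs with hS
  · exact det_reducedIncMatrix_mul_self_of_connected S hS
  · rw [det_reducedIncMatrix_eq_zero_of_not_connected S hS, zero_mul]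

end SimpleGraph

section AppendedOnes

variable {R : Type*} [CommRing R] {m : ℕ}

/-- Adding all rows to row `p` leaves `(m + 1) • Pi.single p 1` there, the columns of `L` summing
to zero. -/
lemma det_updateCol_one_eq_mul_det_submatrix_succAbove
    (L : Matrix (Fin (m + 1)) (Fin (m + 1)) R) (p : Fin (m + 1)) (hL : ∀ j, ∑ i, L i j = 0) :
    (L.updateCol p 1).det = (m + 1) * (L.submatrix p.succAbove p.succAbove).det := by
  set N := L.updateCol p 1
  have hrow : ∑ k, (1 : R) • N k = Pi.single p ((m : R) + 1) := by
    ext j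
    rw [Finset.sum_apply]
    rcases eq_or_ne j p with rfl | hj
    · simp [N]
    · simp [N, hj, hL]
  have := det_updateRow_sum N p fun _ => 1
  rw [hrow, one_smul] at this
  rw [← this, det_succ_row _ p, sum_eq_single p (fun j _ hj => by simp [hj]) (by simp)]
  simp [N, ← two_mul, pow_mul]

/-- `M = (L with last column 1) * U` for the unitriangular `U` that agrees with `A` off the last
column. -/
lemma det_append_one_mul_upperOnes_eq_det_updateCol
    (L : Matrix (Fin (m + 1)) (Fin (m + 1)) R) (A : Matrix (Fin (m + 1)) (Fin m) R)
    (hA : ∀ i j, A i j = if (i : ℕ) ≤ (j : ℕ) then 1 else 0)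
    (M : Matrix (Fin (m + 1)) (Fin (m + 1)) R)
    (hM : ∀ i (j : Fin (m + 1)), M i j = if h : (j : ℕ) < m then (L * A) i ⟨j, h⟩ else 1) :
    M.det = (L.updateCol (Fin.last m) 1).det := by
  let U : Matrix (Fin (m + 1)) (Fin (m + 1)) R := .of fun k j =>
    if j = Fin.last m then (if k = Fin.last m then 1 else 0) else if k ≤ j then 1 else 0
  have hU : U.det = 1 := by
    rw [det_of_isUpperTriangular fun i j (hji : j < i) => by
      simp [U, hji.not_ge, (hji.trans_le (Fin.le_last i)).ne]]
    exact prod_eq_one fun i _ => by by_cases hi : i = Fin.last m <;> simp [U, hi]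
  have hMU : M = L.updateCol (Fin.last m) 1 * U := by
    ext i j
    rw [hM, mul_apply]
    rcases Fin.eq_castSucc_or_eq_last j with ⟨j, rfl⟩ | rfl
    · simp only [Fin.val_castSucc, j.isLt, dif_pos, mul_apply, hA]
      refine sum_congr rfl fun k _ => ?_
      rcases Fin.eq_castSucc_or_eq_last k with ⟨k, rfl⟩ | rfl
      · simp [U, Fin.castSucc_ne_last]
      · simp [U, (Fin.castSucc_lt_last j).not_ge]
    · simp [U]
  rw [hMU, det_mul, hU, mul_one]

end AppendedOnes

theorem abs_det_lapB_appended_ones_general {n : ℕ} (hn : 0 < n)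
    (G : SimpleGraph (Fin n)) [DecidableRel G.Adj]
    (κ : ℕ) (hκ : κ = Nat.card {H : G.Subgraph // H.IsSpanning ∧ H.coe.IsTree})
    (A : Matrix (Fin n) (Fin (n - 1)) ℤ)
    (hA : ∀ i j, A i j = if (i : ℕ) ≤ (j : ℕ) then 1 else 0)
    (M : Matrix (Fin n) (Fin n) ℤ)
    (hM : ∀ i (j : Fin n), M i j =
      if h : (j : ℕ) < n - 1 then (G.lapMatrix ℤ * A) i ⟨j, h⟩ else 1) :
    M.det.natAbs = n * κ := by
  obtain ⟨m, rfl⟩ : ∃ m, n = m + 1 := ⟨n - 1, by omega⟩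
  have hcol : ∀ j, ∑ i, G.lapMatrix ℤ i j = 0 := fun j => by
    simpa [mulVec, dotProduct, (G.isSymm_lapMatrix (R := ℤ)).apply j] using
      congrFun (G.lapMatrix_mulVec_const_eq_zero (R := ℤ)) j
  have hminor : ((G.lapMatrix ℤ).submatrix (Fin.last m).succAbove (Fin.last m).succAbove).det =
      ((G.lapMatrix ℤ).submatrix (↑) (↑) : Matrix {v // v ≠ Fin.last m} _ ℤ).det :=
    det_submatrix_equiv_self (finSuccAboveEquiv (Fin.last m))
      ((G.lapMatrix ℤ).submatrix (↑) (↑))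
  rw [det_append_one_mul_upperOnes_eq_det_updateCol _ A hA M hM,
    det_updateCol_one_eq_mul_det_submatrix_succAbove _ _ hcol, hminor,
    G.det_lapMatrix_submatrix_eq_card_spanning_isTree, ← hκ]
  exact_mod_cast Int.natAbs_natCast ((m + 1) * κ)

/-- For a connected graph `G` on `n` vertices, `|det [L_B | 1]| = n·κ`, where
`L_B = L·A`, `[L_B | 1]` appends a column of ones, and `κ` is the number of
spanning trees of `G`. -/
theorem abs_det_lapB_appended_ones {n : ℕ} (hn : 0 < n)
    (G : SimpleGraph (Fin n)) [DecidableRel G.Adj] (hG : G.Connected)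
    (κ : ℕ) (hκ : κ = Nat.card {H : G.Subgraph // H.IsSpanning ∧ H.coe.IsTree})
    (A : Matrix (Fin n) (Fin (n - 1)) ℤ)
    (hA : ∀ i j, A i j = if (i : ℕ) ≤ (j : ℕ) then 1 else 0)
    (M : Matrix (Fin n) (Fin n) ℤ)
    (hM : ∀ i (j : Fin n), M i j =
      if h : (j : ℕ) < n - 1 then (G.lapMatrix ℤ * A) i ⟨j, h⟩ else 1) :
    M.det.natAbs = n * κ :=
  abs_det_lapB_appended_ones_general hn G κ hκ A hA M hM
end

section
/- Let G be a connected graph on n vertices, L its Laplacian, and L_B = L·A with A as above. For all indices i, k ∈ [n] with i ≠ k and j ∈ [n-2], det(L_B(i,k | j)) = det(L(i,k | j,n)) + det(L(i,k | j+1,n)), where M(S | T) denotes the submatrix of M obtained by deleting rows indexed by S and columns indexed by T. For j = n-1, det(L_B(i,k | n-1)) = det(L(i,k | n-1,n)). -/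
lemma card_compl_pair {n : ℕ} {a b : Fin n} (h : a ≠ b) :
    ({a, b}ᶜ : Finset (Fin n)).card = n - 2 := by
  rw [Finset.card_compl, Finset.card_pair h, Fintype.card_fin]

lemma card_compl_single {n : ℕ} (a : Fin n) :
    ({a}ᶜ : Finset (Fin n)).card = n - 1 := by
  simp [Finset.card_compl]

/-- `delRC M s t hs ht` is the submatrix of `M` obtained by deleting the rows
indexed by `s` and the columns indexed by `t` (rows/columns kept in
increasing order). -/
def delRC {m n k l : ℕ} (M : Matrix (Fin m) (Fin n) ℤ)
    (s : Finset (Fin m)) (t : Finset (Fin n))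
    (hs : sᶜ.card = k) (ht : tᶜ.card = l) : Matrix (Fin k) (Fin l) ℤ :=
  fun a b => M (sᶜ.orderIsoOfFin hs a) (tᶜ.orderIsoOfFin ht b)


lemma sum_cut' (F : ℕ → ℤ) (v N : ℕ) (hv : v < N) :
    (∑ c ∈ Finset.range N, if c ≤ v then F c else 0) = ∑ c ∈ Finset.range (v + 1), F c := by
  rw [← Finset.sum_subset (Finset.range_subset_range.mpr hv)
      (fun x _ hx => if_neg (by simp only [Finset.mem_range, not_lt] at hx; omega))]
  exact Finset.sum_congr rfl fun x hx => if_pos (by have := Finset.mem_range.mp hx; omega)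

lemma sum_shift (F : ℕ → ℤ) (jv : ℕ) :
    ∀ b, jv ≤ b →
    (∑ t ∈ Finset.range (b + 1),
        if t < jv then F t else if t = jv then F (jv + 1) + F jv else F (t + 1)) =
      ∑ c ∈ Finset.range (b + 2), F c := by
  intro b
  induction b with
  | zero =>
    intro hb
    have : jv = 0 := by omega
    subst this
    simp [Finset.sum_range_succ]
    ring
  | succ b ih =>
    intro hb
    rw [Finset.sum_range_succ]
    by_cases hjb : jv ≤ b
    · rw [ih hjb, if_neg (by omega), if_neg (by omega), ← Finset.sum_range_succ]
    · have hj : jv = b + 1 := by omega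
      subst hj
      rw [if_neg (lt_irrefl _), if_pos rfl,
        Finset.sum_congr rfl (fun x hx => if_pos (Finset.mem_range.mp hx))]
      show _ = ∑ c ∈ Finset.range (b + 2 + 1), F c
      rw [Finset.sum_range_succ (f := F) (n := b + 2), Finset.sum_range_succ (f := F) (n := b + 1)]
      ring

lemma det_triu' (m : ℕ) :
    (Matrix.of fun b b' : Fin m => if b ≤ b' then (1 : ℤ) else 0).det = 1 := by
  rw [Matrix.det_of_upperTriangular (by
    intro a b hab
    simp only [Matrix.of_apply]
    exact if_neg (not_le.mpr hab))]
  simp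

lemma fin_sum_cut {X : ℕ} (g : ℕ → ℤ) (v : ℕ) (hv : v < X) :
    (∑ t : Fin X, if (t : ℕ) ≤ v then g (t : ℕ) else 0) = ∑ t ∈ Finset.range (v + 1), g t := by
  have h := Fin.sum_univ_eq_sum_range (fun x => if x ≤ v then g x else 0) X
  exact h.trans (sum_cut' g v X hv)

lemma main1 {m : ℕ} (N : Matrix (Fin m) (Fin (m + 2)) ℤ) (jv : ℕ) (hj : jv < m)
    (e1 : Fin m → Fin (m + 1)) (he1 : ∀ b, (e1 b : ℕ) = if (b : ℕ) < jv then (b : ℕ) else b + 1)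
    (e2 e3 : Fin m → Fin (m + 2))
    (he2 : ∀ b, (e2 b : ℕ) = if (b : ℕ) < jv then (b : ℕ) else b + 1)
    (he3 : ∀ b, (e3 b : ℕ) = if (b : ℕ) < jv + 1 then (b : ℕ) else b + 1) :
    (Matrix.of fun a b => ∑ c : Fin (m + 2),
        if (c : ℕ) ≤ (e1 b : ℕ) then N a c else 0).det =
      (Matrix.of fun a b => N a (e2 b)).det + (Matrix.of fun a b => N a (e3 b)).det := by
  set U : Matrix (Fin m) (Fin m) ℤ :=
    Matrix.of fun b b' : Fin m => if b ≤ b' then (1 : ℤ) else 0 with hU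
  set jm : Fin m := ⟨jv, hj⟩ with hjm
  set M2 : Matrix (Fin m) (Fin m) ℤ := Matrix.of fun a b => N a (e2 b) with hM2
  set M3 : Matrix (Fin m) (Fin m) ℤ := Matrix.of fun a b => N a (e3 b) with hM3
  set F : Fin m → ℕ → ℤ := fun a c => if h : c < m + 2 then N a ⟨c, h⟩ else 0 with hF
  have hNF : ∀ a (x : Fin (m + 2)), N a x = F a (x : ℕ) := by
    intro a x
    simp [hF, x.2]
  have hjmv : (jm : ℕ) = jv := rfl
  set K : Matrix (Fin m) (Fin m) ℤ :=
    M3.updateCol jm ((fun a => M2 a jm) + (fun a => M3 a jm)) with hK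
  have hKval : ∀ a (t : Fin m), K a t =
      if (t : ℕ) < jv then F a (t : ℕ)
      else if (t : ℕ) = jv then F a (jv + 1) + F a jv else F a ((t : ℕ) + 1) := by
    intro a t
    rw [hK, Matrix.updateCol_apply]
    by_cases h1 : (t : ℕ) = jv
    · have ht : t = jm := Fin.ext (by rw [h1, hjmv])
      rw [if_pos ht, if_neg (show ¬((t : ℕ) < jv) by omega), if_pos h1]
      show M2 a jm + M3 a jm = _
      rw [hM2, hM3]
      simp only [Matrix.of_apply]
      rw [hNF, hNF, he2, he3, hjmv,
        if_neg (show ¬(jv < jv) by omega), if_pos (show jv < jv + 1 by omega)]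
    · have ht : t ≠ jm := fun hc => h1 (by rw [hc, hjmv])
      rw [if_neg ht, hM3]
      simp only [Matrix.of_apply]
      rw [hNF, he3]
      by_cases h2 : (t : ℕ) < jv
      · rw [if_pos (show (t : ℕ) < jv + 1 by omega), if_pos h2]
      · rw [if_neg (show ¬((t : ℕ) < jv + 1) by omega), if_neg h2, if_neg h1]
  have hprod : (Matrix.of fun a b => ∑ c : Fin (m + 2),
      if (c : ℕ) ≤ (e1 b : ℕ) then N a c else 0) = K * U := by
    ext a b
    rw [Matrix.mul_apply]
    simp only [Matrix.of_apply]
    have hR : (∑ t : Fin m, K a t * U t b) = ∑ t ∈ Finset.range ((b : ℕ) + 1),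
        (fun x => if x < jv then F a x
          else if x = jv then F a (jv + 1) + F a jv else F a (x + 1)) t := by
      have h1 : (∑ t : Fin m, K a t * U t b) = ∑ t : Fin m,
          if (t : ℕ) ≤ (b : ℕ) then
            (fun x => if x < jv then F a x
              else if x = jv then F a (jv + 1) + F a jv else F a (x + 1)) (t : ℕ) else 0 := by
        refine Finset.sum_congr rfl fun t _ => ?_
        rw [hKval a t]
        simp only [hU, Matrix.of_apply]
        by_cases h : t ≤ b
        · rw [if_pos h, mul_one, if_pos (Fin.le_def.mp h)]
        · rw [if_neg h, mul_zero, if_neg (fun hh => h (Fin.le_def.mpr hh))]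
      exact h1.trans (fin_sum_cut (fun x => if x < jv then F a x
        else if x = jv then F a (jv + 1) + F a jv else F a (x + 1)) _ b.2)
    have hL : (∑ c : Fin (m + 2), if (c : ℕ) ≤ (e1 b : ℕ) then N a c else 0) =
        ∑ c ∈ Finset.range ((e1 b : ℕ) + 1), F a c := by
      have h1 : (∑ c : Fin (m + 2), if (c : ℕ) ≤ (e1 b : ℕ) then N a c else 0) =
          ∑ c : Fin (m + 2), if (c : ℕ) ≤ (e1 b : ℕ) then F a (c : ℕ) else 0 :=
        Finset.sum_congr rfl fun c _ => by rw [hNF]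
      exact h1.trans (fin_sum_cut _ _ (by have := (e1 b).2; omega))
    rw [hL, hR, he1]
    by_cases hb : (b : ℕ) < jv
    · rw [if_pos hb]
      exact (Finset.sum_congr rfl fun x hx =>
        if_pos (by have := Finset.mem_range.mp hx; omega)).symm
    · rw [if_neg hb]
      exact (sum_shift (F a) jv b (by omega)).symm
  rw [hprod, Matrix.det_mul, det_triu', mul_one, hK, Matrix.det_updateCol_add]
  congr 1
  · congr 1
    ext a b
    rw [Matrix.updateCol_apply]
    by_cases h : b = jm
    · rw [if_pos h, h]
    · rw [if_neg h, hM2, hM3]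
      simp only [Matrix.of_apply]
      rw [hNF, hNF, he2, he3]
      have hbj : (b : ℕ) ≠ jv := fun hc => h (Fin.ext (by rw [hc, hjmv]))
      by_cases h2 : (b : ℕ) < jv
      · rw [if_pos h2, if_pos (show (b : ℕ) < jv + 1 by omega)]
      · rw [if_neg h2, if_neg (show ¬((b : ℕ) < jv + 1) by omega)]
  · rw [Matrix.updateCol_eq_self]

lemma main2 {m : ℕ} (N : Matrix (Fin m) (Fin (m + 2)) ℤ)
    (e1 : Fin m → Fin (m + 1)) (he1 : ∀ b, (e1 b : ℕ) = (b : ℕ))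
    (e2 : Fin m → Fin (m + 2)) (he2 : ∀ b, (e2 b : ℕ) = (b : ℕ)) :
    (Matrix.of fun a b => ∑ c : Fin (m + 2),
        if (c : ℕ) ≤ (e1 b : ℕ) then N a c else 0).det =
      (Matrix.of fun a b => N a (e2 b)).det := by
  set U : Matrix (Fin m) (Fin m) ℤ :=
    Matrix.of fun b b' : Fin m => if b ≤ b' then (1 : ℤ) else 0 with hU
  set M2 : Matrix (Fin m) (Fin m) ℤ := Matrix.of fun a b => N a (e2 b) with hM2
  set F : Fin m → ℕ → ℤ := fun a c => if h : c < m + 2 then N a ⟨c, h⟩ else 0 with hF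
  have hNF : ∀ a (x : Fin (m + 2)), N a x = F a (x : ℕ) := by
    intro a x
    simp [hF, x.2]
  have hprod : (Matrix.of fun a b => ∑ c : Fin (m + 2),
      if (c : ℕ) ≤ (e1 b : ℕ) then N a c else 0) = M2 * U := by
    ext a b
    rw [Matrix.mul_apply]
    simp only [Matrix.of_apply]
    have hR : (∑ t : Fin m, M2 a t * U t b) = ∑ t ∈ Finset.range ((b : ℕ) + 1), F a t := by
      have h1 : (∑ t : Fin m, M2 a t * U t b) = ∑ t : Fin m,
          if (t : ℕ) ≤ (b : ℕ) then F a (t : ℕ) else 0 := by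
        refine Finset.sum_congr rfl fun t _ => ?_
        rw [hM2]
        simp only [hU, Matrix.of_apply]
        rw [hNF, he2]
        by_cases h : t ≤ b
        · rw [if_pos h, mul_one, if_pos (Fin.le_def.mp h)]
        · rw [if_neg h, mul_zero, if_neg (fun hh => h (Fin.le_def.mpr hh))]
      exact h1.trans (fin_sum_cut _ _ b.2)
    have hL : (∑ c : Fin (m + 2), if (c : ℕ) ≤ (e1 b : ℕ) then N a c else 0) =
        ∑ c ∈ Finset.range ((e1 b : ℕ) + 1), F a c := by
      have h1 : (∑ c : Fin (m + 2), if (c : ℕ) ≤ (e1 b : ℕ) then N a c else 0) =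
          ∑ c : Fin (m + 2), if (c : ℕ) ≤ (e1 b : ℕ) then F a (c : ℕ) else 0 :=
        Finset.sum_congr rfl fun c _ => by rw [hNF]
      exact h1.trans (fin_sum_cut _ _ (by have := (e1 b).2; omega))
    rw [hL, hR, he1]
  rw [hprod, Matrix.det_mul, det_triu', mul_one]


lemma emb_single_val {N k : ℕ} (hk : k + 1 = N) (j : Fin N)
    (h : ({j}ᶜ : Finset (Fin N)).card = k) (b : Fin k) :
    ((({j}ᶜ : Finset (Fin N)).orderIsoOfFin h b : Fin N) : ℕ) =
      if (b : ℕ) < (j : ℕ) then (b : ℕ) else (b : ℕ) + 1 := by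
  have hf : (fun b : Fin k => (⟨if (b : ℕ) < (j : ℕ) then (b : ℕ) else (b : ℕ) + 1,
      by have := b.2; split <;> omega⟩ : Fin N)) =
      ({j}ᶜ : Finset (Fin N)).orderEmbOfFin h := by
    apply Finset.orderEmbOfFin_unique
    · intro x
      simp only [Finset.mem_compl, Finset.mem_singleton, Fin.ext_iff]
      have := x.2; split <;> omega
    · intro x y hxy
      have hxy' : (x : ℕ) < (y : ℕ) := hxy
      simp only [Fin.mk_lt_mk]
      split <;> split <;> omega
  rw [Finset.coe_orderIsoOfFin_apply, ← hf]

lemma emb_pair_val {N k : ℕ} (hk : k + 2 = N) (p q : Fin N)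
    (hp : (p : ℕ) + 1 < N) (hq : (q : ℕ) + 1 = N)
    (h : ({p, q}ᶜ : Finset (Fin N)).card = k) (b : Fin k) :
    ((({p, q}ᶜ : Finset (Fin N)).orderIsoOfFin h b : Fin N) : ℕ) =
      if (b : ℕ) < (p : ℕ) then (b : ℕ) else (b : ℕ) + 1 := by
  have hf : (fun b : Fin k => (⟨if (b : ℕ) < (p : ℕ) then (b : ℕ) else (b : ℕ) + 1,
      by have := b.2; split <;> omega⟩ : Fin N)) =
      ({p, q}ᶜ : Finset (Fin N)).orderEmbOfFin h := by
    apply Finset.orderEmbOfFin_unique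
    · intro x
      simp only [Finset.mem_compl, Finset.mem_insert, Finset.mem_singleton, Fin.ext_iff, not_or]
      have := x.2
      constructor
      · split <;> omega
      · split <;> omega
    · intro x y hxy
      have hxy' : (x : ℕ) < (y : ℕ) := hxy
      simp only [Fin.mk_lt_mk]
      split <;> split <;> omega
  rw [Finset.coe_orderIsoOfFin_apply, ← hf]

lemma det_triu (m : ℕ) :
    (Matrix.of fun b b' : Fin m => if b ≤ b' then (1 : ℤ) else 0).det = 1 := by
  rw [Matrix.det_of_upperTriangular (by
    intro a b hab
    simp only [Matrix.of_apply]
    exact if_neg (not_le.mpr hab))]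
  simp

lemma sum_cut (F : ℕ → ℤ) (v N : ℕ) (hv : v < N) :
    (∑ c ∈ Finset.range N, if c ≤ v then F c else 0) = ∑ c ∈ Finset.range (v + 1), F c := by
  rw [← Finset.sum_subset (Finset.range_subset_range.mpr hv)
      (fun x _ hx => if_neg (by simp only [Finset.mem_range, not_lt] at hx; omega))]
  exact Finset.sum_congr rfl fun x hx => if_pos (by have := Finset.mem_range.mp hx; omega)

/-- Second-minor relation between `L_B = L·A` and the Laplacian `L`:
`det L_B(i,k | j) = det L(i,k | j, n) + det L(i,k | j+1, n)` for `j ∈ [n-2]`,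
and `det L_B(i,k | n-1) = det L(i,k | n-1, n)`. -/
theorem det_second_minor_lapB {n : ℕ} (hn : 3 ≤ n)
    (G : SimpleGraph (Fin n)) [DecidableRel G.Adj] (hG : G.Connected)
    (A : Matrix (Fin n) (Fin (n - 1)) ℤ)
    (hA : ∀ i j, A i j = if (i : ℕ) ≤ (j : ℕ) then 1 else 0)
    (i k : Fin n) (hik : i ≠ k) (j : Fin (n - 1)) :
    (∀ hj : (j : ℕ) + 1 < n - 1,
      (delRC (G.lapMatrix ℤ * A) {i, k} {j} (card_compl_pair hik)
          (card_compl_single j)).det =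
      (delRC (G.lapMatrix ℤ) {i, k}
          {⟨j, lt_of_lt_of_le j.2 (Nat.sub_le n 1)⟩, ⟨n - 1, by omega⟩}
          (card_compl_pair hik)
          (card_compl_pair (by
            have h2 := j.2
            intro h
            rw [Fin.mk.injEq] at h
            omega))).det +
      (delRC (G.lapMatrix ℤ) {i, k}
          {⟨(j : ℕ) + 1, by omega⟩, ⟨n - 1, by omega⟩}
          (card_compl_pair hik)
          (card_compl_pair (by
            intro h
            rw [Fin.mk.injEq] at h
            omega))).det) ∧
    (∀ hj : (j : ℕ) + 1 = n - 1,
      (delRC (G.lapMatrix ℤ * A) {i, k} {j} (card_compl_pair hik)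
          (card_compl_single j)).det =
      (delRC (G.lapMatrix ℤ) {i, k}
          {⟨j, lt_of_lt_of_le j.2 (Nat.sub_le n 1)⟩, ⟨n - 1, by omega⟩}
          (card_compl_pair hik)
          (card_compl_pair (by
            have h2 := j.2
            intro h
            rw [Fin.mk.injEq] at h
            omega))).det) := by
  obtain ⟨m, rfl⟩ : ∃ m, n = m + 2 := ⟨n - 2, by omega⟩
  have hm : 1 ≤ m := by omega
  set L : Matrix (Fin (m + 2)) (Fin (m + 2)) ℤ := G.lapMatrix ℤ with hL
  set N : Matrix (Fin m) (Fin (m + 2)) ℤ := Matrix.of fun a c =>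
    L (({i, k}ᶜ : Finset (Fin (m + 2))).orderIsoOfFin (card_compl_pair hik) a) c with hN
  have hEq1 : delRC (L * A) {i, k} {j} (card_compl_pair hik) (card_compl_single j)
      = Matrix.of (fun a b => ∑ c : Fin (m + 2),
          if (c : ℕ) ≤ (((({j}ᶜ : Finset (Fin (m + 2 - 1))).orderIsoOfFin
              (card_compl_single j) b : Fin (m + 2 - 1))) : ℕ) then N a c else 0) := by
    ext a b
    show (L * A) _ _ = _
    rw [Matrix.mul_apply]
    simp only [Matrix.of_apply]
    refine Finset.sum_congr rfl fun c _ => ?_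
    rw [hA]
    by_cases hc : (c : ℕ) ≤ (((({j}ᶜ : Finset (Fin (m + 2 - 1))).orderIsoOfFin
        (card_compl_single j) b : Fin (m + 2 - 1))) : ℕ)
    · rw [if_pos hc, if_pos hc, mul_one]
      rfl
    · rw [if_neg hc, if_neg hc, mul_zero]
  constructor
  · intro hj
    have hjv : (j : ℕ) < m := by omega
    rw [hEq1]
    exact main1 N (j : ℕ) hjv
      (fun b => ((({j}ᶜ : Finset (Fin (m + 2 - 1))).orderIsoOfFin
          (card_compl_single j) b : Fin (m + 2 - 1))))
      (fun b => emb_single_val (by omega) j (card_compl_single j) b)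
      (fun b => ((({⟨j, lt_of_lt_of_le j.2 (Nat.sub_le (m + 2) 1)⟩, ⟨m + 2 - 1, by omega⟩}ᶜ :
          Finset (Fin (m + 2))).orderIsoOfFin (card_compl_pair (by
            have h2 := j.2
            intro h
            rw [Fin.mk.injEq] at h
            omega)) b : Fin (m + 2))))
      (fun b => ((({⟨(j : ℕ) + 1, by omega⟩, ⟨m + 2 - 1, by omega⟩}ᶜ :
          Finset (Fin (m + 2))).orderIsoOfFin (card_compl_pair (by
            intro h
            rw [Fin.mk.injEq] at h
            omega)) b : Fin (m + 2))))
      (fun b => emb_pair_val (by omega) _ _ (by simp <;> omega) (by simp <;> omega) _ b)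
      (fun b => emb_pair_val (by omega) _ _ (by simp <;> omega) (by simp <;> omega) _ b)
  · intro hj
    have hjv : (j : ℕ) = m := by omega
    rw [hEq1]
    refine main2 N
      (fun b => ((({j}ᶜ : Finset (Fin (m + 2 - 1))).orderIsoOfFin
          (card_compl_single j) b : Fin (m + 2 - 1))))
      (fun b => (emb_single_val (by omega) j (card_compl_single j) b).trans
        (by rw [if_pos (by omega : (b : ℕ) < (j : ℕ))]))
      (fun b => ((({⟨j, lt_of_lt_of_le j.2 (Nat.sub_le (m + 2) 1)⟩, ⟨m + 2 - 1, by omega⟩}ᶜ :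
          Finset (Fin (m + 2))).orderIsoOfFin (card_compl_pair (by
            have h2 := j.2
            intro h
            rw [Fin.mk.injEq] at h
            omega)) b : Fin (m + 2))))
      (fun b => (emb_pair_val (by omega) _ _ (by simp <;> omega) (by simp <;> omega) _ b).trans
        (by rw [if_pos (by simp <;> omega : (b : ℕ) < _)]))
end

section
/- For the complete graph K_n and indices i ≠ j with i,j < n, the determinant of the submatrix L(i,n | j,n) of the Laplacian (delete rows i,n and columns j,n) equals -n^{n-3} up to sign; in particular n^{n-3} divides det(L(i,n | j,n)). -/
lemma card_compl_pair' {n : ℕ} {a b : Fin n} (h : a ≠ b) :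
    ({a, b}ᶜ : Finset (Fin n)).card = n - 2 := by
  rw [Finset.card_compl, Finset.card_pair h, Fintype.card_fin]

lemma detCanon (m : ℕ) (x : ℤ) :
    (Matrix.of fun a b : Fin (m+1) =>
      if a = b ∧ a ≠ Fin.last m then x - 1 else (-1:ℤ)).det = -x ^ m := by
  set B : Matrix (Fin (m+1)) (Fin (m+1)) ℤ :=
    Matrix.of (fun a b => if a = Fin.last m then -1 else if a = b then x else 0) with hB
  have hdet : (Matrix.of fun a b : Fin (m+1) =>
      if a = b ∧ a ≠ Fin.last m then x - 1 else (-1:ℤ)).det = B.det := by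
    apply Matrix.det_eq_of_forall_row_eq_smul_add_const
      (fun i => if i = Fin.last m then 0 else 1) (Fin.last m) (by simp)
    intro a b
    simp only [hB, Matrix.of_apply]
    by_cases ha : a = Fin.last m
    · simp [ha]
    · by_cases hab : a = b
      · subst hab; simp [ha]; ring
      · simp [ha, hab]
  rw [hdet, Matrix.det_of_lowerTriangular B ?_]
  · have : ∀ i : Fin (m+1), B i i = if i = Fin.last m then -1 else x := by
      intro i; simp [hB]
    simp_rw [this]
    rw [Fin.prod_univ_castSucc]
    simp only [if_pos rfl]
    have : ∀ i : Fin m, (if Fin.castSucc i = Fin.last m then (-1:ℤ) else x) = x := by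
      intro i; rw [if_neg (Fin.castSucc_lt_last i).ne]
    simp_rw [this]
    rw [Finset.prod_const, Finset.card_univ, Fintype.card_fin]
    simp
  · intro a b hab
    have h1 : a < b := hab
    have ha : a ≠ Fin.last m := (lt_of_lt_of_le h1 (Fin.le_last b)).ne
    simp [hB, ha, h1.ne]

/-- For the Laplacian `L` of the complete graph `K_n` and `i ≠ j` with
`i, j < n`, `det L(i,n | j,n) = ±n^{n-3}`; in particular `n^{n-3}` divides
this determinant. -/
theorem det_complete_graph_offdiag_second_minor {n : ℕ} (hn : 3 ≤ n)
    (L : Matrix (Fin n) (Fin n) ℤ)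
    (hL : ∀ a b, L a b = if a = b then (n : ℤ) - 1 else -1)
    (i j : Fin n) (hij : i ≠ j)
    (hi : i ≠ ⟨n - 1, by omega⟩) (hj : j ≠ ⟨n - 1, by omega⟩) :
    ((delRC L {i, ⟨n - 1, by omega⟩} {j, ⟨n - 1, by omega⟩}
        (card_compl_pair' hi) (card_compl_pair' hj)).det = (n : ℤ) ^ (n - 3) ∨
     (delRC L {i, ⟨n - 1, by omega⟩} {j, ⟨n - 1, by omega⟩}
        (card_compl_pair' hi) (card_compl_pair' hj)).det = -(n : ℤ) ^ (n - 3)) ∧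
    (n : ℤ) ^ (n - 3) ∣
      (delRC L {i, ⟨n - 1, by omega⟩} {j, ⟨n - 1, by omega⟩}
        (card_compl_pair' hi) (card_compl_pair' hj)).det := by
  set p : Fin n := ⟨n - 1, by omega⟩ with hp
  set m : ℕ := n - 3 with hm
  -- the set of "shared" indices
  set w : Finset (Fin n) := ({i, j, p} : Finset (Fin n))ᶜ with hw
  have hijp : ({i, j, p} : Finset (Fin n)).card = 3 := by
    rw [Finset.card_insert_of_notMem (by simp [hij, hi]),
      Finset.card_pair hj]
  have hwc : w.card = m := by
    rw [hw, Finset.card_compl, hijp, Fintype.card_fin, hm]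
  set u := w.orderIsoOfFin hwc with hu
  set r := (({i, p} : Finset (Fin n))ᶜ).orderIsoOfFin (card_compl_pair' hi) with hr
  set c := (({j, p} : Finset (Fin n))ᶜ).orderIsoOfFin (card_compl_pair' hj) with hc
  have hrmem : ∀ a, (r a : Fin n) ≠ i ∧ (r a : Fin n) ≠ p := by
    intro a
    have := (r a).2
    simp only [Finset.mem_compl, Finset.mem_insert, Finset.mem_singleton, not_or] at this
    exact this
  have hcmem : ∀ b, (c b : Fin n) ≠ j ∧ (c b : Fin n) ≠ p := by
    intro b
    have := (c b).2
    simp only [Finset.mem_compl, Finset.mem_insert, Finset.mem_singleton, not_or] at this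
    exact this
  have hwmem : ∀ x : Fin n, x ≠ i → x ≠ j → x ≠ p → x ∈ w := by
    intro x h1 h2 h3
    simp [hw, Finset.mem_compl, Finset.mem_insert, h1, h2, h3]
  -- row and column relabelings
  set ρ : Fin (n - 2) → Fin (m + 1) := fun a =>
    if h : (r a : Fin n) = j then Fin.last m
    else Fin.castSucc (u.symm ⟨r a, hwmem _ (hrmem a).1 h (hrmem a).2⟩) with hρ
  set σ : Fin (n - 2) → Fin (m + 1) := fun b =>
    if h : (c b : Fin n) = i then Fin.last m
    else Fin.castSucc (u.symm ⟨c b, hwmem _ h (hcmem b).1 (hcmem b).2⟩) with hσ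
  have hρinj : Function.Injective ρ := by
    intro a1 a2 h
    simp only [hρ] at h
    by_cases h1 : (r a1 : Fin n) = j <;> by_cases h2 : (r a2 : Fin n) = j
    · exact r.injective (Subtype.ext (h1.trans h2.symm))
    · rw [dif_pos h1, dif_neg h2] at h
      exact absurd h.symm (Fin.castSucc_lt_last _).ne
    · rw [dif_neg h1, dif_pos h2] at h
      exact absurd h (Fin.castSucc_lt_last _).ne
    · rw [dif_neg h1, dif_neg h2] at h
      have := u.symm.injective (Fin.castSucc_injective _ h)
      have hx := Subtype.ext_iff.mp this
      exact r.injective (Subtype.ext hx)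
  have hσinj : Function.Injective σ := by
    intro b1 b2 h
    simp only [hσ] at h
    by_cases h1 : (c b1 : Fin n) = i <;> by_cases h2 : (c b2 : Fin n) = i
    · exact c.injective (Subtype.ext (h1.trans h2.symm))
    · rw [dif_pos h1, dif_neg h2] at h
      exact absurd h.symm (Fin.castSucc_lt_last _).ne
    · rw [dif_neg h1, dif_pos h2] at h
      exact absurd h (Fin.castSucc_lt_last _).ne
    · rw [dif_neg h1, dif_neg h2] at h
      have := u.symm.injective (Fin.castSucc_injective _ h)
      have hx := Subtype.ext_iff.mp this
      exact c.injective (Subtype.ext hx)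
  have hcard : Fintype.card (Fin (n - 2)) = Fintype.card (Fin (m + 1)) := by
    simp [hm]; omega
  set e : Fin (n - 2) ≃ Fin (m + 1) :=
    Equiv.ofBijective ρ ((Fintype.bijective_iff_injective_and_card ρ).mpr ⟨hρinj, hcard⟩)
    with he
  set f : Fin (n - 2) ≃ Fin (m + 1) :=
    Equiv.ofBijective σ ((Fintype.bijective_iff_injective_and_card σ).mpr ⟨hσinj, hcard⟩)
    with hf
  set C : Matrix (Fin (m+1)) (Fin (m+1)) ℤ :=
    Matrix.of fun a b => if a = b ∧ a ≠ Fin.last m then (n : ℤ) - 1 else -1 with hC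
  -- the minor is a relabeling of C
  have key : delRC L {i, p} {j, p} (card_compl_pair' hi) (card_compl_pair' hj)
      = C.submatrix e f := by
    ext a b
    have hiff : ((r a : Fin n) = (c b : Fin n)) ↔ (ρ a = σ b ∧ ρ a ≠ Fin.last m) := by
      by_cases h1 : (r a : Fin n) = j
      · simp only [hρ, dif_pos h1]
        constructor
        · intro hxy; exact absurd (hxy.symm.trans h1) (hcmem b).1
        · rintro ⟨-, h⟩; exact absurd rfl h
      · by_cases h2 : (c b : Fin n) = i
        · simp only [hρ, hσ, dif_neg h1, dif_pos h2]
          constructor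
          · intro hxy; exact absurd (hxy.trans h2) (hrmem a).1
          · rintro ⟨h, -⟩; exact absurd h (Fin.castSucc_lt_last _).ne
        · simp only [hρ, hσ, dif_neg h1, dif_neg h2]
          constructor
          · intro hxy
            refine ⟨?_, (Fin.castSucc_lt_last _).ne⟩
            congr 1
            exact congrArg u.symm (Subtype.ext hxy)
          · rintro ⟨h, -⟩
            have := u.symm.injective (Fin.castSucc_injective _ h)
            exact Subtype.ext_iff.mp this
    simp only [delRC, Matrix.submatrix_apply, hC, Matrix.of_apply, hL, he, hf,
      Equiv.ofBijective_apply]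
    rw [← hr, ← hc]
    by_cases hxy : (r a : Fin n) = (c b : Fin n)
    · rw [if_pos hxy, if_pos (hiff.mp hxy)]
    · rw [if_neg hxy, if_neg (fun hh => hxy (hiff.mpr hh))]
  -- compute the determinant
  set π : Equiv.Perm (Fin (n - 2)) := f.trans e.symm with hπ
  have hsub : C.submatrix ⇑e ⇑f = (C.submatrix ⇑e ⇑e).submatrix id ⇑π := by
    ext a b
    simp [hπ, Matrix.submatrix_apply]
  have hdetC : C.det = -(n : ℤ) ^ m := detCanon m (n : ℤ)
  have hdet : (delRC L {i, p} {j, p} (card_compl_pair' hi) (card_compl_pair' hj)).det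
      = (Equiv.Perm.sign π : ℤ) * (-(n : ℤ) ^ m) := by
    rw [key, hsub, Matrix.det_permute' π, Matrix.det_submatrix_equiv_self, hdetC]
    push_cast
    ring
  rcases Int.units_eq_one_or (Equiv.Perm.sign π) with hs | hs <;>
    rw [hs] at hdet <;> simp only [Units.val_one, Units.val_neg, one_mul, neg_mul, neg_neg] at hdet
  · exact ⟨Or.inr hdet, hdet ▸ ⟨-1, by ring⟩⟩
  · exact ⟨Or.inl hdet, hdet ▸ ⟨1, by ring⟩⟩
end

section
/- If G is a tree on n vertices, then the Laplacian simplex T_G is unimodularly equivalent to the simplex conv{e_1, ..., e_{n-1}, -(e_1+...+e_{n-1})} ⊂ R^{n-1}; consequently T_G has normalized volume n. -/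
/-!
The reduced Laplacian of a tree (rows and columns of one vertex `v` deleted) has determinant 1:
a leaf `u ≠ v` has a single off-diagonal entry in its row, so deleting it is a Schur complement
step whose complement is the reduced Laplacian of the smaller tree.

Since `A` vanishes on its last row and is upper unitriangular on the others, the first `n - 1`
rows of `L·A` form a matrix `N` of determinant 1, and the rows of `L·A` sum to zero because the
columns of `L` do. Hence `(Nᵀ)⁻¹` sends the first `n - 1` vertices of `T_G` to `e₁, …, e_{n-1}`
and the last one to `-(e₁ + ⋯ + e_{n-1})`. Adding all rows of `[L·A | 1]` to the last one turns
that row into `(0, …, 0, n)`, so the determinant is `n · det N = n`.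
-/

open Matrix SimpleGraph

namespace Matrix

variable {R : Type*} [CommRing R] {m : ℕ}

theorem det_eq_det_schur_of_apply_self_eq_one {W : Type*} [Fintype W] [DecidableEq W]
    (B : Matrix W W R) (u : W) (hu : B u u = 1) :
    B.det = (of fun x y : {x // x ≠ u} => B x y - B x u * B u y).det := by
  let e := Equiv.sumCompl (· = u)
  have hblocks : B.submatrix e e =
      fromBlocks 1 (of fun (_ : {x // x = u}) (y : {x // x ≠ u}) => B u y)
        (of fun (x : {x // x ≠ u}) (_ : {x // x = u}) => B x u) (of fun x y => B x y) := by
    ext (⟨i, rfl⟩ | i) (⟨j, rfl⟩ | j) <;> simp [e, hu]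
  rw [← det_submatrix_equiv_self e, hblocks, det_fromBlocks_one₁₁]
  congr 1
  ext x y
  simp [mul_apply]

theorem sum_mul_apply_eq_zero {ι κ : Type*} [Fintype ι] {L : Matrix ι ι R}
    (hL : ∀ k, ∑ i, L i k = 0) (A : Matrix ι κ R) (j : κ) : ∑ i, (L * A) i j = 0 := by
  simp only [mul_apply]
  rw [Finset.sum_comm]
  simp [← Finset.sum_mul, hL]

theorem submatrix_castSucc_mul {κ : Type*} (L : Matrix (Fin (m + 1)) (Fin (m + 1)) R)
    {A : Matrix (Fin (m + 1)) κ R} (hA : ∀ j, A (Fin.last m) j = 0) :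
    (L * A).submatrix Fin.castSucc id =
      L.submatrix Fin.castSucc Fin.castSucc * A.submatrix Fin.castSucc id := by
  ext i j
  simp [mul_apply, Fin.sum_univ_castSucc, hA]

theorem det_ite_le_eq_one : (of fun i j : Fin m => if i ≤ j then (1 : R) else 0).det = 1 := by
  rw [det_of_isUpperTriangular]
  · simp
  · intro i j hij
    exact if_neg (not_le.mpr hij)

theorem det_eq_mul_det_submatrix_castSucc (M : Matrix (Fin (m + 1)) (Fin (m + 1)) R)
    (hlast : ∀ i, M i (Fin.last m) = 1) (hsum : ∀ j : Fin m, ∑ i, M i j.castSucc = 0) :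
    M.det = (m + 1) * (M.submatrix Fin.castSucc Fin.castSucc).det := by
  have hrows : ∑ i, M i = fun j => ∑ i, M i j :=
    funext fun j => Finset.sum_apply j _ fun i => M i
  have hrow := det_updateRow_sum M (Fin.last m) fun _ => 1
  simp only [one_smul, hrows] at hrow
  rw [← hrow, det_succ_row _ (Fin.last m), Fin.sum_univ_castSucc]
  simp only [submatrix_updateRow_succAbove, updateRow_self, hsum, hlast]
  simp

theorem image_range_mulVec_inv_transpose {B : Matrix (Fin (m + 1)) (Fin m) R}
    (hsum : ∀ j, ∑ i, B i j = 0) (hB : IsUnit (B.submatrix Fin.castSucc id).det) :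
    (fun v => (B.submatrix Fin.castSucc id)ᵀ⁻¹ *ᵥ v) '' Set.range (fun i => B i) =
      Set.range (fun i => Pi.single i 1) ∪ {fun _ => -1} := by
  set N := B.submatrix Fin.castSucc id
  have hinv (v : Fin m → R) : Nᵀ⁻¹ *ᵥ (Nᵀ *ᵥ v) = v := by
    rw [mulVec_mulVec, nonsing_inv_mul _ (by rwa [det_transpose]), one_mulVec]
  have hcastSucc (i : Fin m) : Nᵀ⁻¹ *ᵥ B i.castSucc = Pi.single i 1 := by
    rw [← hinv (Pi.single i 1), mulVec_single_one]
    rfl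
  have hlast : Nᵀ⁻¹ *ᵥ B (Fin.last m) = fun _ => -1 := by
    rw [← hinv fun _ => -1]
    congr 1
    funext j
    have := hsum j
    rw [Fin.sum_univ_castSucc] at this
    simp [mulVec, dotProduct, N]
    linear_combination this
  ext x
  simp [Fin.exists_fin_succ', hcastSucc, hlast, eq_comm, or_comm]

end Matrix

namespace SimpleGraph

section

variable {V : Type*} [Fintype V] [DecidableEq V] {G : SimpleGraph V} [DecidableRel G.Adj]

theorem degree_induce_compl_singleton_add (u : V) (x : ({u}ᶜ : Set V)) :
    (G.induce {u}ᶜ).degree x + (if G.Adj x u then 1 else 0) = G.degree x := by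
  have hsub := (G.induce {u}ᶜ).degree_eq_sum_if_adj (R := ℕ) x
  have hG := G.degree_eq_sum_if_adj (R := ℕ) x
  simp only [Nat.cast_id] at hsub hG
  rw [hsub, hG, Fintype.sum_eq_add_sum_subtype_ne _ u, add_comm]
  congr 1

theorem lapMatrix_induce_compl_singleton_of_degree_eq_one {R : Type*} [Ring R] {u : V}
    (hu : G.degree u = 1) (x y : ({u}ᶜ : Set V)) :
    (G.induce {u}ᶜ).lapMatrix R x y =
      G.lapMatrix R x y - G.lapMatrix R x u * G.lapMatrix R u y := by
  obtain ⟨w, huw, hw⟩ := degree_eq_one_iff_existsUnique_adj.mp hu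
  have hdeg := G.degree_induce_compl_singleton_add u x
  have hx : (x : V) ≠ u := x.2
  have hy : (y : V) ≠ u := y.2
  have hxw : G.Adj x u ↔ (x : V) = w := by rw [adj_comm]; exact ⟨hw x, fun h => h ▸ huw⟩
  have hyw : G.Adj u y ↔ (y : V) = w := ⟨hw y, fun h => h ▸ huw⟩
  simp [lapMatrix, degMatrix, Matrix.sub_apply, diagonal_apply, hx, hy.symm, hxw, hyw, ← hdeg,
    Subtype.ext_iff]
  split_ifs <;> simp_all

variable (G) in
theorem sum_lapMatrix_apply {R : Type*} [Ring R] (j : V) :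
    ∑ i, G.lapMatrix R i j = 0 := by
  simpa [mulVec, dotProduct, ← (G.isSymm_lapMatrix (R := R)).apply j] using
    congrFun (G.lapMatrix_mulVec_const_eq_zero (R := R)) j

end

theorem IsTree.det_lapMatrix_submatrix_ne {V : Type*} [Fintype V] [DecidableEq V]
    {G : SimpleGraph V} [DecidableRel G.Adj] {R : Type*} [CommRing R] (hG : G.IsTree) (v : V) :
    ((G.lapMatrix R).submatrix (Subtype.val : {x // x ≠ v} → V) Subtype.val).det = 1 := by
  rcases subsingleton_or_nontrivial V with _ | _
  · have : IsEmpty {x : V // x ≠ v} := ⟨fun x => x.2 (Subsingleton.elim _ _)⟩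
    exact det_isEmpty
  obtain ⟨u, huv, hu⟩ : ∃ u, u ≠ v ∧ G.degree u = 1 := by
    obtain ⟨u₁, u₂, hne, h₁, h₂⟩ := hG.exists_ne_and_degree_eq_one
    by_cases h : u₁ = v
    · exact ⟨u₂, fun h' => hne (h.trans h'.symm), h₂⟩
    · exact ⟨u₁, h, h₁⟩
  have hG' : (G.induce {u}ᶜ).IsTree :=
    ⟨hG.connected.induce_compl_singleton_of_degree_eq_one hu, hG.isAcyclic.induce _⟩
  have hvu : v ∈ ({u}ᶜ : Set V) := huv.symm
  let e :
      {y : ({u}ᶜ : Set V) // y ≠ ⟨v, hvu⟩} ≃ {x : {x // x ≠ v} // x ≠ ⟨u, huv⟩} :=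
    { toFun y := ⟨⟨y.1, fun h => y.2 (Subtype.ext h)⟩, fun h => y.1.2 congr(($h).1)⟩
      invFun x := ⟨⟨x.1, fun h => x.2 (Subtype.ext h)⟩, fun h => x.1.2 congr(($h).1)⟩ }
  rw [det_eq_det_schur_of_apply_self_eq_one _ ⟨u, huv⟩ (by simp [lapMatrix, degMatrix, hu]),
    ← hG'.det_lapMatrix_submatrix_ne (R := R) ⟨v, hvu⟩, ← det_submatrix_equiv_self e]
  congr 1
  ext x y
  simp [e, lapMatrix_induce_compl_singleton_of_degree_eq_one hu]
termination_by Fintype.card V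
decreasing_by exact Fintype.card_subtype_lt (p := (· ∈ ({u}ᶜ : Set V))) (x := u) (by simp)

theorem IsTree.det_lapMatrix_submatrix_castSucc {R : Type*} [CommRing R] {m : ℕ}
    {G : SimpleGraph (Fin (m + 1))} [DecidableRel G.Adj] (hG : G.IsTree) :
    ((G.lapMatrix R).submatrix Fin.castSucc Fin.castSucc).det = 1 := by
  rw [← hG.det_lapMatrix_submatrix_ne (Fin.last m),
    ← det_submatrix_equiv_self (finSuccAboveEquiv (Fin.last m))]
  congr 1
  ext i j
  simp [finSuccAboveEquiv_apply]

end SimpleGraph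

theorem tree_laplacian_simplex_unimodular_general {n : ℕ}
    (G : SimpleGraph (Fin n)) [DecidableRel G.Adj] (hG : G.IsTree)
    (A : Matrix (Fin n) (Fin (n - 1)) ℤ)
    (hA : ∀ i j, A i j = if (i : ℕ) ≤ (j : ℕ) then 1 else 0)
    (M : Matrix (Fin n) (Fin n) ℤ)
    (hM : ∀ i (j : Fin n), M i j =
      if h : (j : ℕ) < n - 1 then (G.lapMatrix ℤ * A) i ⟨j, h⟩ else 1) :
    (∃ (U : Matrix (Fin (n - 1)) (Fin (n - 1)) ℤ) (b : Fin (n - 1) → ℤ),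
      IsUnit U.det ∧
      ((fun v => U.mulVec v + b) ''
          (Set.range fun i : Fin n => (G.lapMatrix ℤ * A) i)) =
        (Set.range fun i : Fin (n - 1) => (Pi.single i 1 : Fin (n - 1) → ℤ)) ∪
          {fun _ => -1}) ∧
    M.det.natAbs = n := by
  obtain ⟨m, rfl⟩ : ∃ m, n = m + 1 :=
    Nat.exists_eq_add_one.mpr (Fin.pos_iff_nonempty.mpr hG.connected.nonempty)
  set B := G.lapMatrix ℤ * A
  have hsum : ∀ j, ∑ i, B i j = 0 := sum_mul_apply_eq_zero G.sum_lapMatrix_apply A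
  have hA_last : ∀ j, A (Fin.last m) j = 0 := fun j => by simp [hA]
  have hA_tri : A.submatrix Fin.castSucc id = of fun i j : Fin m => if i ≤ j then 1 else 0 := by
    ext i j
    simp [hA]
  have hdetN : (B.submatrix Fin.castSucc id).det = 1 := by
    rw [submatrix_castSucc_mul _ hA_last, det_mul, hG.det_lapMatrix_submatrix_castSucc, hA_tri,
      det_ite_le_eq_one, one_mul]
  have hMN : M.submatrix Fin.castSucc Fin.castSucc = B.submatrix Fin.castSucc id := by
    ext i j
    simp [hM]
  -- `Fin (m + 1 - 1)` is `Fin m` only up to unfolding, so the instance search needs the ascription.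
  have hU : IsUnit (B.submatrix Fin.castSucc id : Matrix (Fin m) (Fin m) ℤ)ᵀ⁻¹.det :=
    isUnit_nonsing_inv_det _ (by rw [det_transpose, hdetN]; exact isUnit_one)
  refine ⟨⟨_, 0, hU, by simpa using image_range_mulVec_inv_transpose hsum (by simp [hdetN])⟩,
    ?_⟩
  rw [det_eq_mul_det_submatrix_castSucc M (fun i => by simp [hM]) (fun j => by simp [hM, hsum]),
    hMN, hdetN]
  simp
  omega

/-- If `G` is a tree on `n` vertices, then the Laplacian simplex `T_G`
(the convex hull of the rows of `L_B = L·A`) is unimodularly equivalent to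
`conv{e_1, …, e_{n-1}, -(e_1 + ⋯ + e_{n-1})}`: an affine lattice-preserving
map carries the vertex set of one onto the other.  Consequently `T_G` has
normalized volume `n`, i.e. `|det [L_B | 1]| = n`. -/
theorem tree_laplacian_simplex_unimodular {n : ℕ} (hn : 2 ≤ n)
    (G : SimpleGraph (Fin n)) [DecidableRel G.Adj] (hG : G.IsTree)
    (A : Matrix (Fin n) (Fin (n - 1)) ℤ)
    (hA : ∀ i j, A i j = if (i : ℕ) ≤ (j : ℕ) then 1 else 0)
    (M : Matrix (Fin n) (Fin n) ℤ)
    (hM : ∀ i (j : Fin n), M i j =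
      if h : (j : ℕ) < n - 1 then (G.lapMatrix ℤ * A) i ⟨j, h⟩ else 1) :
    (∃ (U : Matrix (Fin (n - 1)) (Fin (n - 1)) ℤ) (b : Fin (n - 1) → ℤ),
      IsUnit U.det ∧
      ((fun v => U.mulVec v + b) ''
          (Set.range fun i : Fin n => (G.lapMatrix ℤ * A) i)) =
        (Set.range fun i : Fin (n - 1) => (Pi.single i 1 : Fin (n - 1) → ℤ)) ∪
          {fun _ => -1}) ∧
    M.det.natAbs = n :=
  tree_laplacian_simplex_unimodular_general G hG A hA M hM
end

section
/- Let n ≥ 3 be an odd prime. The h*-vector of the Laplacian simplex T_{C_n} is (1,1,...,1, n²-n+1, 1,...,1), i.e., h*_i = 1 for all i ≠ (n-1)/2 and h*_{(n-1)/2} = n² - n + 1. Equivalently: for each height 0 ≤ i ≤ n-1, the number of pairs (α,β) ∈ (Z/nZ)² with (1/n)·Σ_{j=0}^{n-1} ((α + jβ) mod n) = i equals 1 if i ≠ (n-1)/2 and equals n² - n + 1 if i = (n-1)/2. -/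
lemma cycle_sum_nonzero {n : ℕ} (hp : n.Prime) (hodd : Odd n) (a b : ℕ) (hb : ¬ n ∣ b) :
    ∑ j ∈ Finset.range n, (a + j * b) % n = (n - 1) / 2 * n := by
  have hn0 : 0 < n := hp.pos
  have hcop : Nat.gcd n b = 1 := hp.coprime_iff_not_dvd.mpr hb
  have hinj : ∀ x ∈ Finset.range n, ∀ y ∈ Finset.range n,
      (a + x * b) % n = (a + y * b) % n → x = y := by
    intro x hx y hy h
    simp only [Finset.mem_range] at hx hy
    have h1 : a + x * b ≡ a + y * b [MOD n] := h
    have h2 : x * b ≡ y * b [MOD n] := Nat.ModEq.add_left_cancel' a h1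
    have h3 : x ≡ y [MOD n] := h2.cancel_right_of_coprime hcop
    have h4 : x % n = y % n := h3
    rw [Nat.mod_eq_of_lt hx, Nat.mod_eq_of_lt hy] at h4
    exact h4
  have himg : (Finset.range n).image (fun j => (a + j * b) % n) = Finset.range n := by
    apply Finset.eq_of_subset_of_card_le
    · intro k hk
      simp only [Finset.mem_image, Finset.mem_range] at hk ⊢
      obtain ⟨j, _, hj⟩ := hk
      subst hj
      exact Nat.mod_lt _ hn0
    · rw [Finset.card_image_of_injOn (fun x hx y hy h => hinj x hx y hy h)]
  have hs : ∑ j ∈ Finset.range n, (a + j * b) % n = ∑ k ∈ Finset.range n, k := by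
    conv_rhs => rw [← himg]
    rw [Finset.sum_image hinj]
  rw [hs]
  obtain ⟨m, hm⟩ := hodd
  have hm2 : (n - 1) / 2 = m := by omega
  rw [hm2]
  have h2 : (∑ k ∈ Finset.range n, k) * 2 = n * (n - 1) := Finset.sum_range_id_mul_two n
  have hm1 : n - 1 = 2 * m := by omega
  rw [hm1] at h2
  have h3 : m * n * 2 = n * (2 * m) := by ring
  exact Nat.eq_of_mul_eq_mul_right (by norm_num) (h2.trans h3.symm)

/-- For an odd prime `n`, the `h^*`-vector of `T_{C_n}` is
`(1,…,1, n²-n+1, 1,…,1)`: for each height `0 ≤ i ≤ n-1`, the number of pairs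
`(α,β) ∈ (ℤ/nℤ)²` with `(1/n)·Σ_{j=0}^{n-1} ((α+jβ) mod n) = i` equals `1`
if `i ≠ (n-1)/2` and `n² - n + 1` if `i = (n-1)/2`. -/
theorem odd_prime_cycle_hstar {n : ℕ} (hp : n.Prime) (hodd : Odd n)
    (hn : 3 ≤ n) (i : ℕ) (hi : i ≤ n - 1) :
    ((Finset.range n ×ˢ Finset.range n).filter fun p =>
        ∑ j ∈ Finset.range n, (p.1 + j * p.2) % n = i * n).card =
      if i = (n - 1) / 2 then n ^ 2 - n + 1 else 1 := by
  have hn0 : 0 < n := hp.pos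
  have hin : i < n := by omega
  have hzero : ∀ a < n, ∑ j ∈ Finset.range n, (a + j * 0) % n = a * n := by
    intro a ha
    simp [Nat.mod_eq_of_lt ha, mul_comm]
  have hkey : ∀ a b, b < n → b ≠ 0 →
      ∑ j ∈ Finset.range n, (a + j * b) % n = (n - 1) / 2 * n :=
    fun a b hb hb0 =>
      cycle_sum_nonzero hp hodd a b (fun hd => hb0 (Nat.eq_zero_of_dvd_of_lt hd hb))
  by_cases hic : i = (n - 1) / 2
  · rw [if_pos hic]
    have hset : ((Finset.range n ×ˢ Finset.range n).filter fun p =>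
        ∑ j ∈ Finset.range n, (p.1 + j * p.2) % n = i * n) =
        insert (i, 0) (Finset.range n ×ˢ ((Finset.range n).erase 0)) := by
      ext ⟨a, b⟩
      simp only [Finset.mem_filter, Finset.mem_product, Finset.mem_range, Finset.mem_insert,
        Finset.mem_erase, Prod.mk.injEq]
      constructor
      · rintro ⟨⟨ha, hb⟩, hsum⟩
        by_cases hb0 : b = 0
        · subst hb0
          rw [hzero a ha] at hsum
          left
          exact ⟨Nat.eq_of_mul_eq_mul_right hn0 hsum, rfl⟩
        · exact Or.inr ⟨ha, hb0, hb⟩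
      · rintro (⟨rfl, rfl⟩ | ⟨ha, hb0, hb⟩)
        · exact ⟨⟨hin, hn0⟩, by rw [hzero a hin]⟩
        · refine ⟨⟨ha, hb⟩, ?_⟩
          rw [hkey a b hb hb0, hic]
    rw [hset, Finset.card_insert_of_notMem (by simp), Finset.card_product,
      Finset.card_erase_of_mem (by simp [hn0]), Finset.card_range]
    have h1 : n * (n - 1) + n = n * n := by
      rw [← Nat.mul_succ]
      congr 1
      omega
    have h2 : n ^ 2 = n * n := sq n
    omega
  · rw [if_neg hic]
    have hset : ((Finset.range n ×ˢ Finset.range n).filter fun p =>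
        ∑ j ∈ Finset.range n, (p.1 + j * p.2) % n = i * n) = {(i, 0)} := by
      ext ⟨a, b⟩
      simp only [Finset.mem_filter, Finset.mem_product, Finset.mem_range, Finset.mem_singleton,
        Prod.mk.injEq]
      constructor
      · rintro ⟨⟨ha, hb⟩, hsum⟩
        by_cases hb0 : b = 0
        · subst hb0
          rw [hzero a ha] at hsum
          exact ⟨Nat.eq_of_mul_eq_mul_right hn0 hsum, rfl⟩
        · rw [hkey a b hb hb0] at hsum
          exact absurd (Nat.eq_of_mul_eq_mul_right hn0 hsum).symm hic
      · rintro ⟨rfl, rfl⟩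
        exact ⟨⟨hin, hn0⟩, by rw [hzero a hin]⟩
    rw [hset, Finset.card_singleton]
end

section
/- Let n ≥ 3 be odd and let β ∈ Z/nZ with gcd(β,n) = d. Then min over α ∈ Z/nZ of (1/n)·Σ_{j=0}^{n-1} ((α + jβ) mod n) equals (n - d)/2, attained at α = 0. -/
open Finset

lemma shift_periodic (f : ℕ → ℕ) (m : ℕ) (hf : ∀ j, f (j + m) = f j) :
    ∀ a j, f (a * m + j) = f j := by
  intro a
  induction a with
  | zero => simp
  | succ a ih =>
    intro j
    have : (a+1) * m + j = (a * m + j) + m := by ring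
    rw [this, hf, ih]

/-- grouping a periodic sum -/
lemma sum_periodic_group (f : ℕ → ℕ) (m : ℕ) (hf : ∀ j, f (j + m) = f j) (a : ℕ) :
    ∑ j ∈ range (a * m), f j = a * ∑ j ∈ range m, f j := by
  induction a with
  | zero => simp
  | succ a ih =>
    rw [Nat.succ_mul, Finset.sum_range_add, ih, Nat.succ_mul]
    congr 1
    exact Finset.sum_congr rfl fun j _ => shift_periodic f m hf a j

lemma key {n : ℕ} (hn : 0 < n) (hodd : Odd n) (β : ℕ) (d : ℕ) (hd : d = Nat.gcd β n)
    (α : ℕ) :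
    ∑ j ∈ Finset.range n, (α + j * β) % n = n * (α % d) + n * ((n - d) / 2) := by
  have hdβ : d ∣ β := hd ▸ Nat.gcd_dvd_left β n
  have hdn : d ∣ n := hd ▸ Nat.gcd_dvd_right β n
  have hd0 : 0 < d := hd ▸ Nat.gcd_pos_of_pos_right β hn
  obtain ⟨m, hnm⟩ := hdn
  have hm0 : 0 < m := Nat.pos_of_ne_zero (by rintro rfl; simp at hnm; omega)
  set f : ℕ → ℕ := fun j => (α + j * β) % n with hfdef
  set r := α % d with hr
  have hrd : r < d := Nat.mod_lt _ hd0
  -- periodicity with period m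
  have hper : ∀ j, f (j + m) = f j := by
    intro j
    obtain ⟨b, hb⟩ := hdβ
    have : (j + m) * β = j * β + b * n := by
      rw [hb, hnm]; ring
    simp only [hfdef, this, ← add_assoc, Nat.add_mul_mod_self_right]
  -- group the sum
  have hgroup : ∑ j ∈ range n, f j = d * ∑ j ∈ range m, f j := by
    rw [hnm]; exact sum_periodic_group f m hper d
  -- injectivity of f on range m
  have hinjkey : ∀ i j, i ≤ j → j < m → f i = f j → i = j := by
    intro i j h hj hij
    have hmod : (α + i * β) % n = (α + j * β) % n := hij
    have hdvd : n ∣ (j - i) * β := by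
      have hle : i * β ≤ j * β := Nat.mul_le_mul_right _ h
      have h1 : (α + j * β) - (α + i * β) = (j - i) * β := by
        rw [Nat.sub_mul]; omega
      have h2 : (α + i * β) ≤ (α + j * β) := by omega
      have h3 := (Nat.modEq_iff_dvd' h2).mp hmod
      rwa [h1] at h3
    obtain ⟨b, hb⟩ := hdβ
    have hcop : Nat.Coprime b m := by
      have hc := Nat.coprime_div_gcd_div_gcd (m := β) (n := n) (by rw [← hd]; omega)
      rw [← hd] at hc
      have e1 : β / d = b := by rw [hb]; exact Nat.mul_div_cancel_left b hd0
      have e2 : n / d = m := by rw [hnm]; exact Nat.mul_div_cancel_left m hd0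
      rwa [e1, e2] at hc
    have hmdvd : m ∣ (j - i) := by
      obtain ⟨c, hc⟩ : d * m ∣ (j - i) * (d * b) := by rw [← hb, ← hnm]; exact hdvd
      have h2 : m ∣ (j - i) * b := by
        refine ⟨c, Nat.eq_of_mul_eq_mul_left hd0 ?_⟩
        calc d * ((j - i) * b) = (j - i) * (d * b) := by ring
          _ = d * m * c := hc
          _ = d * (m * c) := by ring
      exact Nat.Coprime.dvd_of_dvd_mul_right hcop.symm h2
    obtain ⟨c, hc⟩ := hmdvd
    rcases Nat.eq_zero_or_pos c with h0 | h0
    · subst h0; simp at hc; omega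
    · have h1 : m ≤ m * c := Nat.le_mul_of_pos_right _ h0
      omega
  have hinj : Set.InjOn f (range m) := by
    intro i hi j hj hij
    simp only [coe_range, Set.mem_Iio] at hi hj
    rcases le_total i j with h | h
    · exact hinjkey i j h hj hij
    · exact (hinjkey j i h hi hij.symm).symm
  -- values of f
  have hval : ∀ j, f j < n ∧ f j % d = r := by
    intro j
    refine ⟨Nat.mod_lt _ hn, ?_⟩
    rw [hfdef]
    simp only
    rw [Nat.mod_mod_of_dvd _ ⟨m, hnm⟩]
    obtain ⟨b, hb⟩ := hdβ
    rw [hb, hr]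
    have : j * (d * b) = d * (j * b) := by ring
    rw [this, Nat.add_mul_mod_self_left]
  -- the target finset
  set A : Finset ℕ := (range n).filter (fun x => x % d = r) with hA
  have hEA : (range m).image (fun k => r + k * d) = A := by
    ext x
    simp only [mem_image, mem_range, hA, mem_filter]
    constructor
    · rintro ⟨k, hk, rfl⟩
      constructor
      · calc r + k * d < d + k * d := by omega
          _ = (k + 1) * d := by ring
          _ ≤ m * d := Nat.mul_le_mul_right _ (by omega)
          _ = n := by rw [hnm]; ring
      · simp [Nat.add_mul_mod_self_right, Nat.mod_eq_of_lt hrd]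
    · rintro ⟨hx, hxr⟩
      refine ⟨x / d, ?_, ?_⟩
      · rw [Nat.div_lt_iff_lt_mul hd0, mul_comm m d, ← hnm]; exact hx
      · have hh := Nat.div_add_mod x d
        rw [hxr] at hh
        linarith [hh]
  have himinj : ∀ a ∈ range m, ∀ b ∈ range m, r + a * d = r + b * d → a = b := by
    intro a _ b _ h
    have := Nat.add_left_cancel h
    exact Nat.eq_of_mul_eq_mul_right hd0 this
  have hFA : (range m).image f = A := by
    apply Finset.eq_of_subset_of_card_le
    · intro x hx
      simp only [mem_image, mem_range] at hx
      obtain ⟨j, hj, rfl⟩ := hx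
      simp only [hA, mem_filter, mem_range]
      exact ⟨(hval j).1, (hval j).2⟩
    · rw [← hEA, Finset.card_image_of_injOn (fun a ha b hb h => himinj a ha b hb h),
        Finset.card_image_of_injOn hinj]
  have hsum : ∑ j ∈ range m, f j = ∑ k ∈ range m, (r + k * d) :=
    calc ∑ j ∈ range m, f j
        = ∑ x ∈ (range m).image f, x :=
          (Finset.sum_image (f := fun x => x) (g := f)
            (fun a ha b hb h => hinj (mem_coe.mpr ha) (mem_coe.mpr hb) h)).symm
      _ = ∑ x ∈ (range m).image (fun k => r + k * d), x := by rw [hFA, ← hEA]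
      _ = ∑ k ∈ range m, (r + k * d) := Finset.sum_image (f := fun x => x) (g := fun k => r + k * d) himinj
  -- arithmetic
  have hgauss : (∑ i ∈ range m, i) * 2 = m * (m - 1) := Finset.sum_range_id_mul_two m
  have hsum2 : ∑ k ∈ range m, (r + k * d) = m * r + (∑ i ∈ range m, i) * d := by
    rw [Finset.sum_add_distrib, Finset.sum_const, card_range, smul_eq_mul, ← Finset.sum_mul]
  have hmodd : Odd m := by
    rcases Nat.even_or_odd m with h | h
    · exact absurd (hnm ▸ h.mul_left d) (Nat.not_even_iff_odd.mpr hodd)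
    · exact h
  have hdodd : Odd d := by
    rcases Nat.even_or_odd d with h | h
    · exact absurd (hnm ▸ h.mul_right m) (Nat.not_even_iff_odd.mpr hodd)
    · exact h
  -- final computation
  rw [hgroup, hsum, hsum2]
  have h3 : 2 ∣ (n - d) := by
    rcases hodd with ⟨k, hk⟩; rcases hdodd with ⟨l, hl⟩; omega
  apply Nat.eq_of_mul_eq_mul_left (show 0 < 2 by norm_num)
  have e1 : 2 * ((n - d) / 2) = n - d := Nat.two_mul_div_two_of_even (even_iff_two_dvd.mpr h3)
  have e2 : 2 * (∑ i ∈ range m, i) = m * (m - 1) := by rw [mul_comm]; exact hgauss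
  have hnd : n - d = d * (m - 1) := by rw [hnm, Nat.mul_sub_one]
  calc 2 * (d * (m * r + (∑ i ∈ range m, i) * d))
      = d * m * (2 * r) + (2 * ∑ i ∈ range m, i) * d * d := by ring
    _ = n * (2 * r) + (m * (m-1)) * d * d := by rw [e2, hnm]
    _ = n * (2 * r) + (d * m) * (d * (m - 1)) := by ring
    _ = n * (2 * r) + n * (n - d) := by rw [hnd, ← hnm]
    _ = n * (2 * r) + n * (2 * ((n - d) / 2)) := by rw [e1]
    _ = 2 * (n * r + n * ((n - d) / 2)) := by ring

/-- For odd `n ≥ 3` and `β` with `gcd(β,n) = d`, the minimum over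
`α ∈ {0,…,n-1}` of `(1/n)·Σ_{j=0}^{n-1} ((α+jβ) mod n)` is `(n-d)/2`,
attained at `α = 0`. -/
theorem min_height_odd_cycle {n : ℕ} (hn : 3 ≤ n) (hodd : Odd n)
    (β : ℕ) (hβ : β < n) (d : ℕ) (hd : d = Nat.gcd β n) :
    (∑ j ∈ Finset.range n, (0 + j * β) % n = n * ((n - d) / 2)) ∧
    (∀ α < n, n * ((n - d) / 2) ≤ ∑ j ∈ Finset.range n, (α + j * β) % n) := by
  constructor
  · simpa using key (by omega) hodd β d hd 0
  · intro α _
    rw [key (by omega) hodd β d hd α]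
    exact Nat.le_add_left _ _
end

section
/- For each n ≥ 1 and each integer t ≥ 0, the number of lattice points in the t-th dilate of the Laplacian simplex T_{K_n} of the complete graph equals C(tn + n - 1, n - 1), the number of weak compositions of tn into n parts. -/
/-!
The vertex `vᵢ` of `T_{K_n}` has coordinates `vᵢ j = n·[i ≤ j] - (j + 1)`. Hence `x = ∑ cᵢ vᵢ`
with `c ≥ 0` and `∑ cᵢ = t` exactly when the slacks `x_{i+1} - x_i + t` (where `x₀ = xₙ = 0`) are
the numbers `n cᵢ`. So `tT` is cut out by the nonnegativity of the slacks, and taking slacks and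
taking partial sums are inverse bijections between the lattice points of `tT` and the weak
compositions of `tn` into `n` parts, which stars and bars counts.
-/

open Pointwise Finset

section ConvexHull

variable {ι E : Type*} [Fintype ι] [AddCommGroup E] [Module ℝ E]

theorem convexHull_range_eq_image_stdSimplex (v : ι → E) :
    convexHull ℝ (Set.range v) = (fun w => ∑ i, w i • v i) '' stdSimplex ℝ ι := by
  classical
  have hv : Set.range v = Fintype.linearCombination ℝ v '' Set.range fun i => Pi.single i 1 := by
    rw [← Set.range_comp]
    congr
    funext i
    simp [Fintype.linearCombination_apply_single]
  rw [hv, ← LinearMap.image_convexHull, convexHull_rangle_single_eq_stdSimplex]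
  rfl

theorem mem_smul_convexHull_range_iff [Nonempty ι] (v : ι → E) {t : ℝ} (ht : 0 ≤ t) {x : E} :
    x ∈ t • convexHull ℝ (Set.range v) ↔
      ∃ c : ι → ℝ, (∀ i, 0 ≤ c i) ∧ ∑ i, c i = t ∧ ∑ i, c i • v i = x := by
  classical
  rw [convexHull_range_eq_image_stdSimplex]
  constructor
  · rintro ⟨_, ⟨w, ⟨hw0, hw1⟩, rfl⟩, rfl⟩
    refine ⟨t • w, fun i => mul_nonneg ht (hw0 i), ?_, ?_⟩
    · simp [← mul_sum, hw1]
    · simp [smul_sum, smul_smul]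
  · rintro ⟨c, hc0, rfl, rfl⟩
    rcases ht.eq_or_lt with hsum | hsum
    · have hc : c = 0 := funext fun i =>
        (sum_eq_zero_iff_of_nonneg fun i _ => hc0 i).1 hsum.symm i (mem_univ i)
      have hne : ((fun w => ∑ i, w i • v i) '' stdSimplex ℝ ι).Nonempty :=
        ⟨_, _, single_mem_stdSimplex ℝ (Classical.arbitrary ι), rfl⟩
      simp [hc, Set.zero_smul_set hne]
    · refine ⟨_, ⟨(∑ i, c i)⁻¹ • c, ⟨fun i => ?_, ?_⟩, rfl⟩, ?_⟩
      · exact mul_nonneg (inv_nonneg.2 hsum.le) (hc0 i)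
      · simp [← mul_sum, hsum.ne']
      · simp [smul_sum, smul_smul, hsum.ne']

end ConvexHull

theorem Fin.sum_Iic_val_eq_sum_range {M : Type*} [AddCommMonoid M] {n : ℕ} (g : ℕ → M)
    (b : Fin n) : ∑ i ∈ Iic b, g i = ∑ k ∈ range (b + 1), g k := by
  rw [← Nat.Iio_eq_range, Finset.Iio_add_one_eq_Iic, ← Fin.map_valEmbedding_Iic, sum_map]
  rfl

theorem card_weakCompositions {α : Type*} [Fintype α] (k : ℕ) :
    Nat.card {z : α → ℕ // ∑ i, z i = k} = (Fintype.card α + k - 1).choose k := by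
  classical
  rw [← Nat.card_congr (Sym.equivNatSumOfFintype α k), Nat.card_eq_fintype_card,
    Sym.card_sym_eq_choose]

namespace LaplacianSimplex

section Slack

variable {R : Type*} [CommRing R] {m : ℕ}

def pad (x : Fin m → R) (k : ℕ) : R :=
  if h : k ≠ 0 ∧ k ≤ m then x ⟨k - 1, by omega⟩ else 0

@[simp] lemma pad_zero (x : Fin m → R) : pad x 0 = 0 := by simp [pad]

@[simp] lemma pad_last (x : Fin m → R) : pad x (m + 1) = 0 := by simp [pad]

@[simp] lemma pad_val_add_one (x : Fin m → R) (j : Fin m) : pad x (j + 1) = x j := by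
  simp [pad, j.isLt]

/-- The conditions `0 ≤ slack t x i` are the inequalities `-x₁ ≤ t`, `xᵢ - xᵢ₊₁ ≤ t`,
`x_{n-1} ≤ t` describing `tT_{K_n}` (in 1-based coordinates, with `n = m + 1`). -/
def slack (t : R) (x : Fin m → R) (i : Fin (m + 1)) : R :=
  pad x (i + 1) - pad x i + t

def ofSlack (t : R) (s : Fin (m + 1) → R) (j : Fin m) : R :=
  ∑ i ∈ Iic j.castSucc, (s i - t)

lemma sum_slack (t : R) (x : Fin m → R) : ∑ i, slack t x i = (m + 1) * t := by
  unfold slack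
  rw [Fin.sum_univ_eq_sum_range (fun k => pad x (k + 1) - pad x k + t), sum_add_distrib,
    sum_range_sub]
  simp

lemma ofSlack_slack (t : R) (x : Fin m → R) : ofSlack t (slack t x) = x := by
  funext j
  simp only [ofSlack, slack, add_sub_cancel_right]
  rw [Fin.sum_Iic_val_eq_sum_range (fun k => pad x (k + 1) - pad x k), Fin.val_castSucc,
    sum_range_sub]
  simp

lemma pad_ofSlack_val (t : R) (s : Fin (m + 1) → R) (i : Fin (m + 1)) :
    pad (ofSlack t s) i = ∑ i' ∈ Iio i, (s i' - t) := by
  cases i using Fin.cases with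
  | zero => rw [Fin.val_zero, pad_zero, Iio_eq_empty.2 fun i _ => Fin.zero_le i, sum_empty]
  | succ j =>
    have hIio : Iio j.succ = Iic j.castSucc := by
      ext i
      simp [Fin.lt_def, Fin.le_def]
    rw [Fin.val_succ, pad_val_add_one, ofSlack, hIio]

lemma pad_ofSlack_val_add_one (t : R) (s : Fin (m + 1) → R) (hs : ∑ i, s i = (m + 1) * t)
    (i : Fin (m + 1)) : pad (ofSlack t s) (i + 1) = ∑ i' ∈ Iic i, (s i' - t) := by
  cases i using Fin.lastCases with
  | last => simp [← Fin.top_eq_last, sum_sub_distrib, hs]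
  | cast j => rw [Fin.val_castSucc, pad_val_add_one, ofSlack]

lemma slack_ofSlack (t : R) (s : Fin (m + 1) → R) (hs : ∑ i, s i = (m + 1) * t) :
    slack t (ofSlack t s) = s := by
  funext i
  rw [slack, pad_ofSlack_val_add_one t s hs, pad_ofSlack_val, ← sum_Iio_add_eq_sum_Iic]
  ring

lemma slack_intCast (t : ℕ) (x : Fin m → ℤ) (i : Fin (m + 1)) :
    slack (t : R) (fun j => (x j : R)) i = ((slack (t : ℤ) x i : ℤ) : R) := by
  simp only [slack, pad]
  split_ifs <;> push_cast <;> ring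

end Slack

variable {m : ℕ}

/-- Row `i` of `L(K_{m+1}) · A`. -/
def vertex (m : ℕ) (i : Fin (m + 1)) (j : Fin m) : ℝ :=
  if (i : ℕ) ≤ (j : ℕ) then ((m + 1 : ℕ) : ℝ) - 1 - (j : ℕ) else -((j : ℕ) + 1)

lemma sum_smul_vertex (c : Fin (m + 1) → ℝ) :
    ∑ i, c i • vertex m i = ofSlack (∑ i, c i) fun i => (m + 1) * c i := by
  funext j
  have hv : ∀ i, c i * vertex m i j =
      (if i ∈ Iic j.castSucc then (m + 1) * c i else 0) - (j + 1) * c i := by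
    intro i
    simp only [vertex, mem_Iic, Fin.le_def, Fin.val_castSucc]
    split_ifs <;> push_cast <;> ring
  simp only [Finset.sum_apply, Pi.smul_apply, smul_eq_mul, hv, sum_sub_distrib, sum_ite_mem,
    univ_inter, ofSlack, ← mul_sum, Fin.card_Iic, sum_const, nsmul_eq_mul, Fin.val_castSucc]
  push_cast
  ring

theorem mem_smul_convexHull_vertex_iff {t : ℝ} (ht : 0 ≤ t) (x : Fin m → ℝ) :
    x ∈ t • convexHull ℝ (Set.range (vertex m)) ↔ ∀ i, 0 ≤ slack t x i := by
  rw [mem_smul_convexHull_range_iff _ ht]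
  constructor
  · rintro ⟨c, hc0, rfl, rfl⟩ i
    rw [sum_smul_vertex, slack_ofSlack _ _ (by rw [mul_sum])]
    exact mul_nonneg (by positivity) (hc0 i)
  · intro h
    refine ⟨fun i => slack t x i / (m + 1), fun i => div_nonneg (h i) (by positivity), ?_, ?_⟩
    · rw [← sum_div, sum_slack]
      field_simp
    · rw [sum_smul_vertex, ← sum_div, sum_slack]
      convert ofSlack_slack t x using 2 <;> field_simp

def slackEquiv (m t : ℕ) :
    {x : Fin m → ℤ // ∀ i, 0 ≤ slack (t : ℤ) x i} ≃
      {z : Fin (m + 1) → ℕ // ∑ i, z i = (m + 1) * t} where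
  toFun x := ⟨fun i => (slack (t : ℤ) x.1 i).toNat, by
    zify
    rw [sum_congr rfl fun i _ => Int.toNat_of_nonneg (x.2 i), sum_slack]⟩
  invFun z := ⟨ofSlack (t : ℤ) fun i => (z.1 i : ℤ), by
    rw [slack_ofSlack (t : ℤ) (fun i => (z.1 i : ℤ)) (by exact_mod_cast z.2)]
    intro i
    positivity⟩
  left_inv x := Subtype.ext <| by
    simp only [Int.toNat_of_nonneg (x.2 _), ofSlack_slack]
  right_inv z := Subtype.ext <| by
    simp only [slack_ofSlack (t : ℤ) (fun i => (z.1 i : ℤ)) (by exact_mod_cast z.2),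
      Int.toNat_natCast]

end LaplacianSimplex

open LaplacianSimplex

/-- The number of lattice points in the `t`-th dilate of the Laplacian
simplex `T_{K_n}` of the complete graph equals `C(tn+n-1, n-1)`. Here
`T_{K_n}` is the convex hull of the rows `r_i` of `L_B = L(K_n)·A`, where
`r_i` has `j`-th coordinate `n-1-j` if `i ≤ j` and `-(j+1)` otherwise
(0-based indexing). -/
theorem ehrhart_complete_graph {n : ℕ} (hn : 1 ≤ n) (t : ℕ)
    (T : Set (Fin (n - 1) → ℝ))
    (hT : T = convexHull ℝ (Set.range fun i : Fin n =>
      fun j : Fin (n - 1) =>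
        (if (i : ℕ) ≤ (j : ℕ) then (n : ℝ) - 1 - (j : ℕ)
         else -((j : ℕ) + 1)))) :
    Nat.card {x : Fin (n - 1) → ℤ |
        (fun k => (x k : ℝ)) ∈ (t : ℝ) • T} =
      (t * n + n - 1).choose (n - 1) := by
  obtain ⟨m, rfl⟩ : ∃ m, n = m + 1 := ⟨n - 1, by omega⟩
  subst hT
  calc _ = Nat.card {x : Fin m → ℤ // ∀ i, 0 ≤ slack (t : ℤ) x i} :=
        Nat.card_congr <| Equiv.subtypeEquivRight fun x =>
          (mem_smul_convexHull_vertex_iff (Nat.cast_nonneg t) _).trans <| forall_congr' fun i =>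
            (congrArg (0 ≤ ·) (slack_intCast t x i)).to_iff.trans Int.cast_nonneg_iff
    _ = Nat.card {z : Fin (m + 1) → ℕ // ∑ i, z i = (m + 1) * t} :=
        Nat.card_congr (slackEquiv m t)
    _ = _ := by
      rw [card_weakCompositions, Fintype.card_fin, Nat.mul_comm t, Nat.add_sub_cancel,
        show m + 1 + (m + 1) * t - 1 = m + (m + 1) * t by omega,
        show (m + 1) * t + (m + 1) - 1 = m + (m + 1) * t by omega, Nat.choose_symm_add]
end

section
/- The Laplacian simplex of the complete graph K_n equals {x ∈ R^{n-1} : A x ≤ 1}, where A is the n×(n-1) matrix of the signed vertex-edge incidence matrix of a path: A has rows -e_1^T, (e_1 - e_2)^T, ..., (e_{n-2} - e_{n-1})^T, e_{n-1}^T. In particular T_{K_n} is reflexive. -/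
/-!
With `B` the path incidence matrix and `v_k` the rows of `L(K_n)·A'`, one computes
`B v_k = 𝟙 - n e_k`; moreover the columns of `B` sum to zero and `B` is injective. So for
`B x ≤ 𝟙` the weights `c_k = (1 - (B x)_k) / n` are barycentric coordinates: they are nonnegative,
sum to `1`, and `B (∑ c_k v_k) = 𝟙 - n c = B x`, hence `x = ∑ c_k v_k`. Conversely every vertex
satisfies `B v_k ≤ 𝟙`, and the origin satisfies all these inequalities strictly.
-/

open Matrix

theorem convexHull_range_eq_preimage_Iic_one {ι E : Type*} [Fintype ι] [DecidableEq ι]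
    [Nonempty ι] [AddCommGroup E] [Module ℝ E] (L : E →ₗ[ℝ] ι → ℝ)
    (hL : Function.Injective L) (hsum : ∀ x, ∑ i, L x i = 0) (v : ι → E)
    (hv : ∀ k, L (v k) = 1 - (Fintype.card ι : ℝ) • Pi.single k 1) :
    convexHull ℝ (Set.range v) = L ⁻¹' Set.Iic 1 := by
  set N : ℝ := (Fintype.card ι : ℝ)
  have hN : 0 < N := Nat.cast_pos.2 Fintype.card_pos
  refine (convexHull_min ?_ ((convex_Iic 1).linear_preimage L)).antisymm fun x hx => ?_
  · rintro _ ⟨k, rfl⟩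
    rw [Set.mem_preimage, hv k, Set.mem_Iic, sub_le_self_iff]
    exact smul_nonneg hN.le (Pi.single_nonneg.2 zero_le_one)
  set c : ι → ℝ := fun i => (1 - L x i) / N
  have hc : ∑ i, c i = 1 := by
    simp only [c, ← Finset.sum_div, Finset.sum_sub_distrib, hsum, Finset.sum_const,
      Finset.card_univ, nsmul_eq_mul, mul_one, sub_zero]
    exact div_self hN.ne'
  have hx' : x = ∑ k, c k • v k := hL <| by
    ext i
    simp only [map_sum, map_smul, hv, Finset.sum_apply, Pi.smul_apply, Pi.sub_apply,
      Pi.one_apply, smul_eq_mul, Pi.single_apply, mul_sub, mul_one, Finset.sum_sub_distrib, hc]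
    simp only [mul_ite, mul_one, mul_zero, Finset.sum_ite_eq, Finset.mem_univ, if_true, c]
    field_simp
    ring
  rw [hx']
  exact (convex_convexHull ℝ _).sum_mem (fun i _ => div_nonneg (sub_nonneg.2 (hx i)) hN.le) hc
    fun k _ => subset_convexHull ℝ _ ⟨k, rfl⟩

theorem mem_interior_preimage_Iic_one {ι E : Type*} [Finite ι] [TopologicalSpace E]
    {f : E → ι → ℝ} (hf : Continuous f) {x : E} (hx : ∀ i, f x i < 1) :
    x ∈ interior (f ⁻¹' Set.Iic 1) := by
  have hopen : IsOpen (f ⁻¹' Set.univ.pi fun _ => Set.Iio 1) :=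
    (isOpen_set_pi Set.finite_univ fun _ _ => isOpen_Iio).preimage hf
  refine interior_maximal (fun y hy => ?_) hopen fun i _ => hx i
  rw [← Set.pi_univ_Iic]
  exact fun i _ => Set.mem_Iic.2 (hy i trivial).le

def pathIncidence (R : Type*) [Ring R] (n : ℕ) : Matrix (Fin n) (Fin (n - 1)) R :=
  fun i j => if (i : ℕ) = j + 1 then 1 else if (i : ℕ) = j then -1 else 0

def laplacianSimplexVertex (n : ℕ) (k : Fin n) : Fin (n - 1) → ℝ := fun j =>
  if (k : ℕ) ≤ (j : ℕ) then (n : ℝ) - 1 - (j : ℕ) else -((j : ℕ) + 1)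

section
variable {R : Type*} [Ring R] {n : ℕ}

theorem pathIncidence_row (i : Fin n) :
    pathIncidence R n i =
      (if h : 0 < (i : ℕ) then Pi.single ⟨i - 1, by omega⟩ 1 else 0) -
        (if h : (i : ℕ) < n - 1 then Pi.single ⟨i, h⟩ 1 else 0) := by
  ext j
  by_cases h0 : 0 < (i : ℕ) <;> by_cases h1 : (i : ℕ) < n - 1 <;>
    simp only [pathIncidence, h0, h1, dite_true, dite_false, Pi.sub_apply, Pi.zero_apply,
      Pi.single_apply, Fin.ext_iff] <;> split_ifs <;> first | omega | simp

theorem pathIncidence_col (j : Fin (n - 1)) :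
    (pathIncidence R n)ᵀ j = Pi.single ⟨j + 1, by omega⟩ 1 - Pi.single ⟨j, by omega⟩ 1 := by
  ext i
  simp only [transpose_apply, pathIncidence, Pi.sub_apply, Pi.single_apply, Fin.ext_iff]
  split_ifs <;> first | omega | simp

theorem pathIncidence_mulVec_apply (x : Fin (n - 1) → R) (i : Fin n) :
    (pathIncidence R n *ᵥ x) i =
      (if h : 0 < (i : ℕ) then x ⟨i - 1, by omega⟩ else 0) -
        (if h : (i : ℕ) < n - 1 then x ⟨i, h⟩ else 0) := by
  rw [mulVec, pathIncidence_row, sub_dotProduct]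
  split_ifs <;> simp [single_dotProduct]

theorem one_vecMul_pathIncidence : (1 : Fin n → R) ᵥ* pathIncidence R n = 0 := by
  ext j
  change 1 ⬝ᵥ (pathIncidence R n)ᵀ j = 0
  simp [pathIncidence_col, dotProduct_sub]

theorem sum_pathIncidence_mulVec (x : Fin (n - 1) → R) : ∑ i, (pathIncidence R n *ᵥ x) i = 0 := by
  rw [← one_dotProduct, dotProduct_mulVec, one_vecMul_pathIncidence, zero_dotProduct]

theorem eq_zero_of_pathIncidence_mulVec_eq_zero {x : Fin (n - 1) → R}
    (hx : pathIncidence R n *ᵥ x = 0) : x = 0 := by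
  suffices h : ∀ (j : ℕ) (hj : j < n - 1), x ⟨j, hj⟩ = 0 from funext fun j => h j j.isLt
  intro j
  induction j with
  | zero =>
    intro hj
    simpa [pathIncidence_mulVec_apply, hj] using congrFun hx ⟨0, by omega⟩
  | succ j ih =>
    intro hj
    simpa [pathIncidence_mulVec_apply, hj, ih (by omega)] using congrFun hx ⟨j + 1, by omega⟩

theorem pathIncidence_mulVec_injective : Function.Injective (pathIncidence R n *ᵥ ·) :=
  fun x y hxy => sub_eq_zero.1 <| eq_zero_of_pathIncidence_mulVec_eq_zero <| by
    simp only [mulVec_sub, hxy, sub_self]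

end

theorem pathIncidence_mulVec_laplacianSimplexVertex {n : ℕ} (k : Fin n) :
    pathIncidence ℝ n *ᵥ laplacianSimplexVertex n k = 1 - (n : ℝ) • Pi.single k 1 := by
  ext i
  rw [pathIncidence_mulVec_apply]
  simp only [laplacianSimplexVertex, Pi.sub_apply, Pi.one_apply, Pi.smul_apply, Pi.single_apply,
    Fin.ext_iff, smul_eq_mul]
  split_ifs <;> first | omega | (norm_cast; simp only [Int.subNatNat_eq_coe]; omega)

/-- The Laplacian simplex `T_{K_n}` (convex hull of the rows of
`L_B = L(K_n)·A'`) equals `{x : A x ≤ 𝟙}`, where `A` is the signed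
vertex-edge incidence matrix of a path, with rows
`-e_1ᵀ, (e_1-e_2)ᵀ, …, (e_{n-2}-e_{n-1})ᵀ, e_{n-1}ᵀ`.  In particular `T_{K_n}`
is reflexive (it contains the origin in its interior and is defined by an
integer matrix with right-hand sides all `1`). -/
theorem complete_graph_simplex_facets {n : ℕ} (hn : 2 ≤ n)
    (T : Set (Fin (n - 1) → ℝ))
    (hT : T = convexHull ℝ (Set.range fun i : Fin n =>
      fun j : Fin (n - 1) =>
        (if (i : ℕ) ≤ (j : ℕ) then (n : ℝ) - 1 - (j : ℕ)
         else -((j : ℕ) + 1))))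
    (A : Matrix (Fin n) (Fin (n - 1)) ℤ)
    (hA : ∀ i j, A i j =
      if (i : ℕ) = (j : ℕ) + 1 then 1 else if (i : ℕ) = (j : ℕ) then -1 else 0) :
    T = {x : Fin (n - 1) → ℝ |
        ∀ i : Fin n, (A.map (Int.cast : ℤ → ℝ)).mulVec x i ≤ 1} ∧
    (0 : Fin (n - 1) → ℝ) ∈ interior T := by
  have hA' : A.map (Int.cast : ℤ → ℝ) = pathIncidence ℝ n := by
    ext i j
    simp only [Matrix.map_apply, hA, pathIncidence]
    split_ifs <;> simp
  have : Nonempty (Fin n) := ⟨⟨0, by omega⟩⟩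
  have hT' : T = (pathIncidence ℝ n).mulVecLin ⁻¹' Set.Iic 1 := by
    rw [hT]
    exact convexHull_range_eq_preimage_Iic_one _ pathIncidence_mulVec_injective
      sum_pathIncidence_mulVec (laplacianSimplexVertex n)
      (by simpa using pathIncidence_mulVec_laplacianSimplexVertex)
  rw [hA', hT']
  exact ⟨rfl, mem_interior_preimage_Iic_one
    (pathIncidence ℝ n).mulVecLin.continuous_of_finiteDimensional (by simp)⟩
end

section
/- Let n ≥ 2. The inverse of the n×n matrix [L_B | 1] for the complete graph K_n equals (1/n)·M, where M has rows (e_i - e_{i+1})^T for 1 ≤ i ≤ n-1 (viewed in R^n with an appended structure) and last row consisting of all ones; explicitly, M_{ij} = 1 if i=j ≤ n-1, M_{ij} = -1 if j = i+1 ≤ n, M_{nj} = 1 for all j, and M_{ij}=0 otherwise. -/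
/-!
Column `j < n - 1` of `B` is `n • 𝟙[i ≤ j] - (j + 1)` and the last column is all ones. Hence
row `i` minus row `i + 1` of `B` is `n • eᵢ`, while the column sums of `B` are `0` except the
last, which is `n`. These are exactly the rows of `M * B`, so `M * B = n • 1`.
-/

namespace Matrix

variable (R : Type*) [CommRing R] (n : ℕ)

def completeLapBasisOnes : Matrix (Fin n) (Fin n) R :=
  of fun i j =>
    if (j : ℕ) < n - 1 then
      (if (i : ℕ) ≤ (j : ℕ) then (n : R) - 1 - (j : ℕ) else -((j : ℕ) + 1))
    else 1

def consecutiveDiffOnes : Matrix (Fin n) (Fin n) R :=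
  of fun i j =>
    if (i : ℕ) = n - 1 then 1
    else if j = i then 1
    else if (j : ℕ) = (i : ℕ) + 1 then -1 else 0

variable {R n}

theorem completeLapBasisOnes_apply_of_lt {j : Fin n} (hj : (j : ℕ) < n - 1) (i : Fin n) :
    completeLapBasisOnes R n i j = (if i ≤ j then (n : R) else 0) - ((j : ℕ) + 1) := by
  simp only [completeLapBasisOnes, of_apply, if_pos hj, Fin.le_def]
  split_ifs <;> ring

theorem sum_completeLapBasisOnes_col (j : Fin n) :
    ∑ k, completeLapBasisOnes R n k j = if (j : ℕ) < n - 1 then 0 else (n : R) := by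
  split_ifs with hj
  · simp only [completeLapBasisOnes_apply_of_lt hj, Finset.sum_sub_distrib, Finset.sum_ite,
      Finset.sum_const_zero, add_zero, Finset.sum_const, Finset.card_univ, Fintype.card_fin,
      nsmul_eq_mul, Finset.filter_ge_eq_Iic, Fin.card_Iic]
    push_cast; ring
  · simp [completeLapBasisOnes, hj]

theorem completeLapBasisOnes_sub_succ {i : Fin n} (hi : (i : ℕ) + 1 < n) (j : Fin n) :
    completeLapBasisOnes R n i j - completeLapBasisOnes R n ⟨i + 1, hi⟩ j =
      if i = j then (n : R) else 0 := by
  by_cases hj : (j : ℕ) < n - 1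
  · simp only [completeLapBasisOnes_apply_of_lt hj, Fin.le_def, Fin.ext_iff]
    split_ifs <;> first | omega | ring
  · have hij : i ≠ j := fun h => hj (by omega)
    simp [completeLapBasisOnes, hj, hij]

theorem consecutiveDiffOnes_mul_completeLapBasisOnes :
    consecutiveDiffOnes R n * completeLapBasisOnes R n = (n : R) • 1 := by
  ext i j
  rw [mul_apply, smul_apply, one_apply, smul_eq_mul, mul_ite, mul_one, mul_zero]
  by_cases hi : (i : ℕ) = n - 1
  · have hj_lt_iff : ((j : ℕ) < n - 1) ↔ i ≠ j := by rw [Ne, Fin.ext_iff]; omega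
    simp [consecutiveDiffOnes, hi, sum_completeLapBasisOnes_col, hj_lt_iff, ite_not]
  · have hi' : (i : ℕ) + 1 < n := by omega
    have hrow : ∀ k, consecutiveDiffOnes R n i k =
        (if k = i then 1 else 0) - (if k = ⟨i + 1, hi'⟩ then 1 else 0) := by
      intro k
      simp only [consecutiveDiffOnes, of_apply, if_neg hi, Fin.ext_iff]
      split_ifs <;> first | omega | ring
    simp only [hrow, sub_mul, ite_mul, one_mul, zero_mul, Finset.sum_sub_distrib,
      Finset.sum_ite_eq', Finset.mem_univ, if_true]
    exact completeLapBasisOnes_sub_succ hi' j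

end Matrix

theorem complete_graph_appended_inverse_general {n : ℕ}
    (B : Matrix (Fin n) (Fin n) ℚ)
    (hB : ∀ i (j : Fin n), B i j =
      if (j : ℕ) < n - 1 then
        (if (i : ℕ) ≤ (j : ℕ) then (n : ℚ) - 1 - (j : ℕ) else -((j : ℕ) + 1))
      else 1)
    (M : Matrix (Fin n) (Fin n) ℚ)
    (hM : ∀ i (j : Fin n), M i j =
      if (i : ℕ) = n - 1 then 1
      else if j = i then 1
      else if (j : ℕ) = (i : ℕ) + 1 then -1 else 0) :
    B * ((n : ℚ)⁻¹ • M) = 1 ∧ ((n : ℚ)⁻¹ • M) * B = 1 := by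
  obtain rfl : B = Matrix.completeLapBasisOnes ℚ n := Matrix.ext hB
  obtain rfl : M = Matrix.consecutiveDiffOnes ℚ n := Matrix.ext hM
  have hleft :
      ((n : ℚ)⁻¹ • Matrix.consecutiveDiffOnes ℚ n) * Matrix.completeLapBasisOnes ℚ n = 1 := by
    obtain rfl | hn := eq_or_ne n 0
    · exact Subsingleton.elim _ _
    rw [Matrix.smul_mul, Matrix.consecutiveDiffOnes_mul_completeLapBasisOnes, smul_smul,
      inv_mul_cancel₀ (Nat.cast_ne_zero.mpr hn), one_smul]
  exact ⟨mul_eq_one_comm.mp hleft, hleft⟩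

/-- The inverse of the matrix `[L_B | 1]` for the complete graph `K_n` is
`(1/n)·M`, where `M` has rows `(e_i - e_{i+1})ᵀ` for `1 ≤ i ≤ n-1` and last
row all ones. -/
theorem complete_graph_appended_inverse {n : ℕ} (hn : 2 ≤ n)
    (B : Matrix (Fin n) (Fin n) ℚ)
    (hB : ∀ i (j : Fin n), B i j =
      if (j : ℕ) < n - 1 then
        (if (i : ℕ) ≤ (j : ℕ) then (n : ℚ) - 1 - (j : ℕ) else -((j : ℕ) + 1))
      else 1)
    (M : Matrix (Fin n) (Fin n) ℚ)
    (hM : ∀ i (j : Fin n), M i j =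
      if (i : ℕ) = n - 1 then 1
      else if j = i then 1
      else if (j : ℕ) = (i : ℕ) + 1 then -1 else 0) :
    B * ((n : ℚ)⁻¹ • M) = 1 ∧ ((n : ℚ)⁻¹ • M) * B = 1 :=
  complete_graph_appended_inverse_general B hB M hM
end

section
/- For each n ≥ 2 and 0 ≤ i ≤ n-1, the i-th entry of the h*-vector of T_{K_n} equals the number of weak compositions of i·n into n parts each of size at most n-1. In particular these numbers are symmetric: the count for i equals the count for n-1-i. -/
open Finset

private def cext (n : ℕ) (c : Fin n → ℕ) (a : ℕ) : ℕ :=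
  if h : a < n then c ⟨a, h⟩ else 0

private def fxdef (n i : ℕ) (c : Fin n → ℕ) (j : Fin n) : ℤ :=
  if (j : ℕ) < n - 1 then
    ((∑ a ∈ Finset.range ((j : ℕ) + 1), cext n c a : ℕ) : ℤ) - ((j : ℕ) + 1) * (i : ℤ)
  else (i : ℤ)

private lemma sum_dite_univ {M : Type*} [AddCommMonoid M] {n : ℕ} (f : Fin n → M) :
    ∑ a ∈ Finset.range n, (if h : a < n then f ⟨a, h⟩ else 0) = ∑ a, f a := by
  rw [← Fin.sum_univ_eq_sum_range (fun a => if h : a < n then f ⟨a, h⟩ else 0) n]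
  exact Finset.sum_congr rfl fun a _ => by simp [a.isLt]

private lemma sum_cext {n : ℕ} (c : Fin n → ℕ) :
    ∑ a ∈ Finset.range n, cext n c a = ∑ a, c a := by
  simpa [cext] using sum_dite_univ (fun a : Fin n => c a)

private lemma sum_univ_ite_le {M : Type*} [AddCommMonoid M] {n : ℕ} (f : Fin n → M) (j : ℕ)
    (hj : j + 1 ≤ n) :
    (∑ a : Fin n, if (a : ℕ) ≤ j then f a else 0) =
      ∑ a ∈ Finset.range (j + 1), (if h : a < n then f ⟨a, h⟩ else 0) := by
  have h1 : (∑ a : Fin n, if (a : ℕ) ≤ j then f a else 0) =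
      ∑ a ∈ Finset.range n,
        (if a ≤ j then (if h : a < n then f ⟨a, h⟩ else 0) else 0) := by
    rw [← Fin.sum_univ_eq_sum_range
      (fun a => if a ≤ j then (if h : a < n then f ⟨a, h⟩ else 0) else 0) n]
    exact Finset.sum_congr rfl fun a _ => by simp [a.isLt]
  rw [h1, ← Finset.sum_subset (Finset.range_subset_range.2 hj)
    (fun a _ ha => if_neg (by simpa [Nat.lt_succ_iff] using ha))]
  exact Finset.sum_congr rfl fun a ha => if_pos (Nat.lt_succ_iff.1 (Finset.mem_range.1 ha))

private lemma col_last {n : ℕ} {B : Matrix (Fin n) (Fin n) ℤ}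
    (hB : ∀ a (j : Fin n), B a j =
      if (j : ℕ) < n - 1 then
        (if (a : ℕ) ≤ (j : ℕ) then (n : ℤ) - 1 - (j : ℕ) else -((j : ℕ) + 1))
      else 1)
    (lam : Fin n → ℝ) (j : Fin n) (hj : ¬ (j : ℕ) < n - 1) :
    ∑ a : Fin n, lam a * (B a j : ℝ) = ∑ a, lam a := by
  refine Finset.sum_congr rfl fun a _ => ?_
  rw [hB, if_neg hj]
  norm_num

private lemma col_sum {n : ℕ} {B : Matrix (Fin n) (Fin n) ℤ}
    (hB : ∀ a (j : Fin n), B a j =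
      if (j : ℕ) < n - 1 then
        (if (a : ℕ) ≤ (j : ℕ) then (n : ℤ) - 1 - (j : ℕ) else -((j : ℕ) + 1))
      else 1)
    (lam : Fin n → ℝ) (j : Fin n) (hj : (j : ℕ) < n - 1) :
    ∑ a : Fin n, lam a * (B a j : ℝ) =
      (n : ℝ) * (∑ a ∈ Finset.range ((j : ℕ) + 1), (if h : a < n then lam ⟨a, h⟩ else 0))
        - (((j : ℕ) : ℝ) + 1) * ∑ a, lam a := by
  have key : ∀ a : Fin n, lam a * (B a j : ℝ) =
      (if (a : ℕ) ≤ (j : ℕ) then lam a * n else 0) + lam a * (-(((j : ℕ) : ℝ) + 1)) := by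
    intro a
    rw [hB, if_pos hj]
    by_cases h : (a : ℕ) ≤ (j : ℕ)
    · rw [if_pos h, if_pos h]; push_cast; ring
    · rw [if_neg h, if_neg h]; push_cast; ring
  rw [Finset.sum_congr rfl fun a _ => key a, Finset.sum_add_distrib,
    sum_univ_ite_le (fun a => lam a * n) (j : ℕ) (by omega)]
  have h2 : ∑ a ∈ Finset.range ((j : ℕ) + 1), (if h : a < n then lam ⟨a, h⟩ * n else 0)
      = (∑ a ∈ Finset.range ((j : ℕ) + 1), (if h : a < n then lam ⟨a, h⟩ else 0)) * n := by
    rw [Finset.sum_mul]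
    exact Finset.sum_congr rfl fun a _ => by split <;> simp
  rw [h2, ← Finset.sum_mul]
  ring

private lemma fx_mem {n : ℕ} (hn : 2 ≤ n) {B : Matrix (Fin n) (Fin n) ℤ}
    (hB : ∀ a (j : Fin n), B a j =
      if (j : ℕ) < n - 1 then
        (if (a : ℕ) ≤ (j : ℕ) then (n : ℤ) - 1 - (j : ℕ) else -((j : ℕ) + 1))
      else 1)
    {i : ℕ} (c : Fin n → ℕ) (hc1 : ∀ k, c k < n) (hc2 : ∑ k, c k = i * n) :
    (∃ lam : Fin n → ℝ, (∀ a, 0 ≤ lam a ∧ lam a < 1) ∧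
      ∀ j : Fin n, ((fxdef n i c j : ℤ) : ℝ) = ∑ a : Fin n, lam a * (B a j : ℝ)) ∧
    fxdef n i c ⟨n - 1, by omega⟩ = i := by
  have hn0 : (0 : ℝ) < n := by exact_mod_cast (by omega : 0 < n)
  refine ⟨⟨fun a => (c a : ℝ) / n, fun a => ⟨by positivity,
      (div_lt_one hn0).2 (by exact_mod_cast hc1 a)⟩, ?_⟩, ?_⟩
  · intro j
    have hT : ∑ a : Fin n, (c a : ℝ) / n = (i : ℝ) := by
      rw [← Finset.sum_div, div_eq_iff (ne_of_gt hn0)]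
      have : ((∑ a, c a : ℕ) : ℝ) = (i : ℝ) * n := by rw [hc2]; push_cast; ring
      simpa using this
    by_cases hj : (j : ℕ) < n - 1
    · rw [col_sum hB _ j hj, hT]
      have hP : (∑ a ∈ Finset.range ((j : ℕ) + 1),
          (if h : a < n then ((c ⟨a, h⟩ : ℕ) : ℝ) / n else 0)) =
          ((∑ a ∈ Finset.range ((j : ℕ) + 1), cext n c a : ℕ) : ℝ) / n := by
        push_cast
        rw [Finset.sum_div]
        refine Finset.sum_congr rfl fun a _ => ?_
        by_cases h : a < n
        · rw [dif_pos h, cext, dif_pos h]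
        · rw [dif_neg h, cext, dif_neg h]; simp
      rw [hP, fxdef, if_pos hj]
      push_cast
      field_simp
    · rw [col_last hB _ j hj, hT, fxdef, if_neg hj]; push_cast; ring
  · have : ¬ ((⟨n - 1, by omega⟩ : Fin n) : ℕ) < n - 1 := by simp
    rw [fxdef, if_neg this]

private lemma flipMem {n : ℕ} (hn : 2 ≤ n) {i : ℕ} (hi : i ≤ n - 1) (c : Fin n → ℕ)
    (h1 : ∀ k, c k < n) (h2 : ∑ k, c k = i * n) :
    (∀ k, n - 1 - c k < n) ∧ ∑ k : Fin n, (n - 1 - c k) = (n - 1 - i) * n := by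
  refine ⟨fun k => by omega, ?_⟩
  have hsum : ∑ k : Fin n, (n - 1 - c k) + ∑ k : Fin n, c k = (n - 1) * n := by
    rw [← Finset.sum_add_distrib]
    have : ∀ k : Fin n, n - 1 - c k + c k = n - 1 := fun k => by have := h1 k; omega
    rw [Finset.sum_congr rfl fun k _ => this k]
    simp [Finset.sum_const, mul_comm]
  have hkey : (n - 1 - i) * n + i * n = (n - 1) * n := by
    rw [← Nat.add_mul]
    congr 1
    omega
  rw [h2] at hsum
  omega

/-- For `n ≥ 2` and `0 ≤ i ≤ n-1`, the `i`-th entry of the `h^*`-vector of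
`T_{K_n}` — the number of lattice points of the fundamental parallelepiped of
`T_{K_n}` with last coordinate `i` — equals the number of weak compositions
of `i·n` into `n` parts each of size at most `n-1`; moreover these counts are
symmetric: the count for `i` equals the count for `n-1-i`. -/
theorem complete_graph_hstar_weak_compositions {n : ℕ} (hn : 2 ≤ n)
    (B : Matrix (Fin n) (Fin n) ℤ)
    (hB : ∀ a (j : Fin n), B a j =
      if (j : ℕ) < n - 1 then
        (if (a : ℕ) ≤ (j : ℕ) then (n : ℤ) - 1 - (j : ℕ) else -((j : ℕ) + 1))
      else 1)
    (i : ℕ) (hi : i ≤ n - 1) :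
    Nat.card {x : Fin n → ℤ //
        (∃ lam : Fin n → ℝ, (∀ a, 0 ≤ lam a ∧ lam a < 1) ∧
          ∀ j : Fin n, (x j : ℝ) = ∑ a : Fin n, lam a * (B a j : ℝ)) ∧
        x ⟨n - 1, by omega⟩ = i} =
      Nat.card {c : Fin n → ℕ // (∀ k, c k < n) ∧ ∑ k, c k = i * n} ∧
    Nat.card {c : Fin n → ℕ // (∀ k, c k < n) ∧ ∑ k, c k = i * n} =
      Nat.card {c : Fin n → ℕ //
        (∀ k, c k < n) ∧ ∑ k, c k = (n - 1 - i) * n} := by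
  constructor
  · symm
    refine Nat.card_eq_of_bijective
      (fun c => ⟨fxdef n i c.1, fx_mem hn hB c.1 c.2.1 c.2.2⟩) ⟨?_, ?_⟩
    · -- injective
      rintro ⟨c, hc1, hc2⟩ ⟨c', hc1', hc2'⟩ hfeq
      have h : fxdef n i c = fxdef n i c' := congrArg Subtype.val hfeq
      have hP : ∀ m, m ≤ n →
          ∑ a ∈ Finset.range m, cext n c a = ∑ a ∈ Finset.range m, cext n c' a := by
        intro m hm
        rcases Nat.eq_zero_or_pos m with rfl | hm0
        · simp
        rcases eq_or_lt_of_le hm with rfl | hmn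
        · rw [sum_cext, sum_cext, hc2, hc2']
        · have hjlt : m - 1 < n := by omega
          have hth := congrFun h ⟨m - 1, hjlt⟩
          have hcond : ((⟨m - 1, hjlt⟩ : Fin n) : ℕ) < n - 1 := by
            simp only [Fin.val_mk]; omega
          rw [fxdef, fxdef, if_pos hcond, if_pos hcond] at hth
          simp only [Fin.val_mk] at hth
          have hm1 : m - 1 + 1 = m := by omega
          rw [hm1] at hth
          omega
      refine Subtype.ext (funext fun k => ?_)
      have h1 := hP ((k : ℕ) + 1) k.isLt
      have h2 := hP (k : ℕ) (le_of_lt k.isLt)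
      rw [Finset.sum_range_succ, Finset.sum_range_succ] at h1
      have hck : cext n c (k : ℕ) = cext n c' (k : ℕ) := by omega
      simpa [cext, k.isLt] using hck
    · -- surjective
      rintro ⟨x, ⟨lam, hlam, hxeq⟩, hxlast⟩
      have hTi : ∑ a, lam a = (i : ℝ) := by
        have hx := hxeq ⟨n - 1, by omega⟩
        rw [col_last hB lam _ (by simp), hxlast] at hx
        exact_mod_cast hx.symm
      set Sl : ℕ → ℝ := fun m =>
        ∑ a ∈ Finset.range m, (if h : a < n then lam ⟨a, h⟩ else 0) with hSl
      set D : ℕ → ℤ := fun m =>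
        if m = 0 then 0
        else if h : m ≤ n - 1 then x ⟨m - 1, by omega⟩ + (m : ℤ) * i
        else (n : ℤ) * i with hDdef
      have hD : ∀ m, m ≤ n → (D m : ℝ) = n * Sl m := by
        intro m hm
        rcases Nat.eq_zero_or_pos m with rfl | hm0
        · simp [hDdef, hSl]
        by_cases hm1 : m ≤ n - 1
        · have hmn : m - 1 < n := by omega
          have hjlt : ((⟨m - 1, hmn⟩ : Fin n) : ℕ) < n - 1 := by
            simp only [Fin.val_mk]; omega
          have hx := hxeq ⟨m - 1, hmn⟩
          rw [col_sum hB lam _ hjlt] at hx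
          simp only [Fin.val_mk] at hx
          have hm1' : m - 1 + 1 = m := by omega
          rw [hm1'] at hx
          simp only [hDdef]
          rw [if_neg (by omega), dif_pos hm1]
          push_cast
          rw [hx, hTi]
          have : ((m - 1 : ℕ) : ℝ) + 1 = (m : ℝ) := by
            have : ((m - 1 : ℕ) : ℝ) = (m : ℝ) - 1 := by
              push_cast [Nat.cast_sub hm0]; ring
            rw [this]; ring
          rw [this]
          ring
        · have hmn : m = n := by omega
          rw [hmn]
          have hDn : D n = (n : ℤ) * i := by
            simp only [hDdef]
            rw [if_neg (by omega), dif_neg (by omega)]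
          rw [hDn]
          have hSn : Sl n = ∑ a, lam a := sum_dite_univ lam
          rw [hSn, hTi]
          push_cast
          ring
      have hbound : ∀ a : Fin n,
          0 ≤ D ((a : ℕ) + 1) - D (a : ℕ) ∧ D ((a : ℕ) + 1) - D (a : ℕ) < n := by
        intro a
        have h1 : ((D ((a : ℕ) + 1) - D (a : ℕ) : ℤ) : ℝ) = n * lam a := by
          push_cast
          rw [hD _ a.isLt, hD _ (le_of_lt a.isLt)]
          have : Sl ((a : ℕ) + 1) = Sl (a : ℕ) + lam a := by
            simp only [hSl]
            rw [Finset.sum_range_succ, dif_pos a.isLt]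
          rw [this]
          ring
        have hn0 : (0 : ℝ) < n := by exact_mod_cast (by omega : 0 < n)
        constructor
        · have : (0 : ℝ) ≤ ((D ((a : ℕ) + 1) - D (a : ℕ) : ℤ) : ℝ) := by
            rw [h1]; exact mul_nonneg (le_of_lt hn0) (hlam a).1
          exact_mod_cast this
        · have : ((D ((a : ℕ) + 1) - D (a : ℕ) : ℤ) : ℝ) < (n : ℝ) := by
            rw [h1]
            calc (n : ℝ) * lam a < n * 1 := by
                  exact mul_lt_mul_of_pos_left (hlam a).2 hn0
              _ = n := mul_one _
          exact_mod_cast this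
      set c : Fin n → ℕ := fun a => (D ((a : ℕ) + 1) - D (a : ℕ)).toNat with hcdef
      have hcast : ∀ a : Fin n, (c a : ℤ) = D ((a : ℕ) + 1) - D (a : ℕ) :=
        fun a => Int.toNat_of_nonneg (hbound a).1
      have hc1 : ∀ k, c k < n := by
        intro k
        have h1 := (hbound k).2
        have h2 := hcast k
        omega
      have hc2 : ∑ k, c k = i * n := by
        have hz : (∑ k : Fin n, (c k : ℤ)) = (n : ℤ) * i := by
          rw [Finset.sum_congr rfl fun a _ => hcast a,
            Fin.sum_univ_eq_sum_range (fun m => D (m + 1) - D m) n,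
            Finset.sum_range_sub]
          have hDn : D n = (n : ℤ) * i := by
            simp only [hDdef]
            rw [if_neg (by omega), dif_neg (by omega)]
          have hD0 : D 0 = 0 := by simp [hDdef]
          rw [hDn, hD0, sub_zero]
        have : ((∑ k, c k : ℕ) : ℤ) = ((i * n : ℕ) : ℤ) := by
          push_cast
          rw [hz]
          ring
        exact_mod_cast this
      refine ⟨⟨c, hc1, hc2⟩, ?_⟩
      apply Subtype.ext
      funext j
      show fxdef n i c j = x j
      by_cases hj : (j : ℕ) < n - 1
      · rw [fxdef, if_pos hj]
        have hPD : ((∑ a ∈ Finset.range ((j : ℕ) + 1), cext n c a : ℕ) : ℤ)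
            = D ((j : ℕ) + 1) := by
          push_cast
          have hcg : ∀ a ∈ Finset.range ((j : ℕ) + 1),
              ((cext n c a : ℕ) : ℤ) = D (a + 1) - D a := by
            intro a ha
            have han : a < n := by
              have := Finset.mem_range.1 ha
              omega
            rw [cext, dif_pos han]
            exact hcast ⟨a, han⟩
          rw [Finset.sum_congr rfl hcg, Finset.sum_range_sub]
          simp [hDdef]
        rw [hPD]
        simp only [hDdef]
        rw [if_neg (by omega), dif_pos (by omega)]
        have hfe : (⟨(j : ℕ) + 1 - 1, by omega⟩ : Fin n) = j := Fin.ext (by simp)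
        rw [hfe]
        push_cast
        ring
      · rw [fxdef, if_neg hj]
        have hje : j = ⟨n - 1, by omega⟩ := by
          refine Fin.ext ?_
          have := j.isLt
          simp only [Fin.val_mk]
          omega
        rw [hje, hxlast]
  · -- symmetry
    refine Nat.card_congr ⟨
      fun c => ⟨fun k => n - 1 - c.1 k, flipMem hn hi c.1 c.2.1 c.2.2⟩,
      fun c => ⟨fun k => n - 1 - c.1 k, by
        have h := flipMem hn (show n - 1 - i ≤ n - 1 by omega) c.1 c.2.1 c.2.2
        rwa [show n - 1 - (n - 1 - i) = i by omega] at h⟩,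
      fun c => by
        apply Subtype.ext
        funext k
        have := c.2.1 k
        simp only
        omega,
      fun c => by
        apply Subtype.ext
        funext k
        have := c.2.1 k
        simp only
        omega⟩
end
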